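/- arXiv:2402.13619 — 6 statements merged into one kernel-verified Lean document; each statement's English description precedes it below -/
import Mathlib

section
/- If a Lie bracket on a real Hilbert space g satisfies the invariance condition ⟨[x,y],z⟩ = ⟨x,[y,z]⟩ for all x,y,z and is defined everywhere (every pair has a bracket), then the bracket is automatically continuous, i.e., there exists C > 0 with ‖[x,y]‖ ≤ C‖x‖‖y‖ for all x,y. -/
open scoped RealInnerProductSpace

/-- An everywhere-defined Lie bracket on a real Hilbert space whose inner product is
invariant (`⟪[x,y],z⟫ = ⟪x,[y,z]⟫`) is automatically continuous: there is `C > 0` with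
`‖[x,y]‖ ≤ C ‖x‖ ‖y‖`. -/
theorem stmt_0 {g : Type*} [NormedAddCommGroup g] [InnerProductSpace ℝ g] [CompleteSpace g]
    (b : g →ₗ[ℝ] g →ₗ[ℝ] g)
    (hskew : ∀ x y : g, b x y = - b y x)
    (hjacobi : ∀ x y z : g, b x (b y z) = b (b x y) z + b y (b x z))
    (hinv : ∀ x y z : g, ⟪b x y, z⟫ = ⟪x, b y z⟫) :
    ∃ C : ℝ, 0 < C ∧ ∀ x y : g, ‖b x y‖ ≤ C * ‖x‖ * ‖y‖ := by
  -- Step 1: for each `x`, `b x` is continuous, by the closed graph theorem.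
  have hcont : ∀ x : g, Continuous (b x) := by
    intro x
    apply (b x).continuous_of_isClosed_graph
    have hgraph : ((b x).graph : Set (g × g)) =
        ⋂ w : g, {p : g × g | ⟪p.2, w⟫ = - ⟪p.1, b x w⟫} := by
      ext p
      simp only [Set.mem_iInter, SetLike.mem_coe, LinearMap.mem_graph_iff, Set.mem_setOf_eq]
      constructor
      · intro h w
        rw [h, hskew x p.1, inner_neg_left, hinv]
      · intro h
        refine ext_inner_right ℝ fun w => ?_
        rw [h w, hskew x p.1, inner_neg_left, hinv]
    rw [hgraph]
    refine isClosed_iInter fun w => isClosed_eq ?_ ?_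
    · exact (continuous_snd.inner continuous_const)
    · exact (continuous_fst.inner continuous_const).neg
  -- package as continuous linear maps
  let T : g → g →L[ℝ] g := fun x => ⟨b x, hcont x⟩
  -- Step 2: pointwise boundedness of the family `T x` for `‖x‖ ≤ 1`, via Banach–Steinhaus
  obtain ⟨C, hC⟩ : ∃ C, ∀ x : {x : g // ‖x‖ ≤ 1}, ‖T x‖ ≤ C := by
    apply banach_steinhaus
    intro y
    refine ⟨‖T y‖, fun x => ?_⟩
    have : T x.1 y = - T y x.1 := hskew x.1 y
    calc ‖T x.1 y‖ = ‖T y x.1‖ := by rw [this, norm_neg]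
      _ ≤ ‖T y‖ * ‖x.1‖ := (T y).le_opNorm x.1
      _ ≤ ‖T y‖ * 1 := by
          exact mul_le_mul_of_nonneg_left x.2 (norm_nonneg _)
      _ = ‖T y‖ := mul_one _
  refine ⟨max C 1, lt_of_lt_of_le one_pos (le_max_right _ _), fun x y => ?_⟩
  rcases eq_or_ne x 0 with rfl | hx
  · simp
  · have hxn : (0:ℝ) < ‖x‖ := norm_pos_iff.mpr hx
    have hx1 : ‖(‖x‖⁻¹ • x)‖ ≤ 1 := by
      rw [norm_smul, norm_inv, norm_norm, inv_mul_cancel₀ hxn.ne']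
    have h1 : ‖T (‖x‖⁻¹ • x) y‖ ≤ C * ‖y‖ :=
      le_trans ((T _).le_opNorm y) (mul_le_mul_of_nonneg_right (hC ⟨_, hx1⟩) (norm_nonneg _))
    have h2 : T (‖x‖⁻¹ • x) y = ‖x‖⁻¹ • T x y := by
      simp [T, LinearMap.map_smul₂]
    rw [h2, norm_smul, norm_inv, norm_norm] at h1
    have : ‖T x y‖ ≤ ‖x‖ * (C * ‖y‖) := by
      rw [← inv_mul_le_iff₀ hxn]; exact h1
    calc ‖b x y‖ = ‖T x y‖ := rfl
      _ ≤ ‖x‖ * (C * ‖y‖) := this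
      _ ≤ max C 1 * ‖x‖ * ‖y‖ := by
          rw [show ‖x‖ * (C * ‖y‖) = C * ‖x‖ * ‖y‖ by ring]
          have := le_max_left C 1
          gcongr
end

section
/- Let Z be a separable connected abelian Banach–Lie group whose character group Ẑ is uncountable. Then Z admits a norm-continuous unitary representation containing no nonzero Z-eigenvector; hence not every bounded representation of Z is a direct sum of eigenspaces. -/
/-!
For `R` large the set `Ẑ_R = {α ∈ z' : ‖α‖ ≤ R, α(Γ) ⊆ ℤ}` is uncountable; it is weak-* compact,
and metrizable since `z` is separable, so it is an uncountable standard Borel space and carries an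
atomless probability measure `μ`. Multiplication by the characters `χ_α(x) = exp (2πi α(x))` is a
unitary representation of `z` on `L²(Ẑ_R, μ)`, trivial on `Γ`, and Lipschitz for the operator norm
because `|χ_α(x) - χ_α(y)| ≤ 2πR ‖x - y‖`. If `v` is an eigenvector, then `χ_α = c` on a dense
sequence for every `α` in the support of `v`; these values determine `α`, so the support of `v` is
at most a point, hence null.
-/

open MeasureTheory
open scoped ENNReal NNReal FourierTransform

theorem Real.lipschitzWith_fourierChar : LipschitzWith (2 * NNReal.pi) fun t => (𝐞 t : ℂ) := by
  refine lipschitzWith_of_nnnorm_deriv_le differentiable_fourierChar fun t => ?_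
  rw [deriv_fourierChar, ← NNReal.coe_le_coe, coe_nnnorm, norm_mul, Circle.norm_coe, mul_one,
    norm_mul, Complex.norm_I, mul_one]
  simp [abs_of_pos Real.pi_pos]

theorem Set.exists_nat_not_countable_inter_closedBall {α : Type*} [PseudoMetricSpace α]
    {s : Set α} (hs : ¬ s.Countable) (x : α) :
    ∃ n : ℕ, ¬ (s ∩ Metric.closedBall x n).Countable := by
  by_contra! h
  exact hs <| by
    simpa [← Set.inter_iUnion, Metric.iUnion_closedBall_nat] using Set.countable_iUnion h

theorem MeasureTheory.exists_isProbabilityMeasure_nullSingletonClass (X : Type*)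
    [MeasurableSpace X] [StandardBorelSpace X] [Uncountable X] :
    ∃ μ : Measure X, IsProbabilityMeasure μ ∧ NullSingletonClass μ := by
  let e : X ≃ᵐ ℝ := PolishSpace.measurableEquivOfNotCountable not_countable not_countable
  have : IsProbabilityMeasure (volume.restrict (Set.Icc (0 : ℝ) 1)) :=
    ⟨by rw [Measure.restrict_apply_univ, Real.volume_Icc, sub_zero, ENNReal.ofReal_one]⟩
  refine ⟨(volume.restrict (Set.Icc (0 : ℝ) 1)).map e.symm,
    Measure.isProbabilityMeasure_map e.symm.measurable.aemeasurable, ⟨fun k => ?_⟩⟩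
  rw [e.symm.map_apply, e.preimage_symm, Set.image_singleton]
  exact measure_singleton _

theorem TopologicalSpace.polishSpace_of_compactSpace (X : Type*) [TopologicalSpace X]
    [CompactSpace X] [MetrizableSpace X] : PolishSpace X := by
  let := metrizableSpaceMetric X
  infer_instance

section CharacterRepresentation

variable {G X : Type*} [AddGroup G] [MeasurableSpace X] (μ : Measure X)
  (χ : X → AddChar G Circle) (hχ : ∀ x, Measurable fun k => (χ k x : ℂ))

noncomputable def charLinfty (x : G) : Lp ℂ ∞ μ :=
  (memLp_top_of_bound (hχ x).aestronglyMeasurable 1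
    (ae_of_all _ fun _ => (Circle.norm_coe _).le)).toLp _

noncomputable def charRep (x : G) : Lp ℂ 2 μ →L[ℂ] Lp ℂ 2 μ :=
  (ContinuousLinearMap.mul ℂ ℂ).holderL μ ∞ 2 2 (charLinfty μ χ hχ x)

variable {μ χ}

theorem coeFn_charLinfty (x : G) : charLinfty μ χ hχ x =ᵐ[μ] fun k => (χ k x : ℂ) :=
  MemLp.coeFn_toLp _

theorem coeFn_charRep (x : G) (f : Lp ℂ 2 μ) :
    charRep μ χ hχ x f =ᵐ[μ] fun k => (χ k x : ℂ) * f k := by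
  filter_upwards [ContinuousLinearMap.coeFn_holder (r := 2) (ContinuousLinearMap.mul ℂ ℂ)
    (charLinfty μ χ hχ x) f, coeFn_charLinfty hχ x] with k hk hχk
  rw [charRep, ContinuousLinearMap.holderL_apply_apply, hk, ContinuousLinearMap.mul_apply', hχk]

theorem charRep_add (x y : G) :
    charRep μ χ hχ (x + y) = charRep μ χ hχ x * charRep μ χ hχ y := by
  ext1 f
  refine Lp.ext ?_
  filter_upwards [coeFn_charRep hχ (x + y) f, coeFn_charRep hχ x (charRep μ χ hχ y f),
    coeFn_charRep hχ y f] with k hxy hx hy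
  rw [mul_apply_eq_comp, hxy, hx, hy, AddChar.map_add_eq_mul, Circle.coe_mul, mul_assoc]

theorem charRep_eq_one {x : G} (hx : ∀ k, χ k x = 1) : charRep μ χ hχ x = 1 := by
  ext1 f
  refine Lp.ext ?_
  filter_upwards [coeFn_charRep hχ x f] with k hk
  simp [hk, hx]

theorem star_charRep (x : G) : star (charRep μ χ hχ x) = charRep μ χ hχ (-x) := by
  rw [ContinuousLinearMap.star_eq_adjoint, eq_comm, ContinuousLinearMap.eq_adjoint_iff]
  intro f g
  rw [L2.inner_def, L2.inner_def]
  refine integral_congr_ae ?_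
  filter_upwards [coeFn_charRep hχ (-x) f, coeFn_charRep hχ x g] with k hf hg
  rw [hf, hg, AddChar.map_neg_eq_inv, Circle.coe_inv_eq_conj, RCLike.inner_apply,
    RCLike.inner_apply, map_mul, Complex.conj_conj]
  ring

theorem charRep_mem_unitary (x : G) :
    charRep μ χ hχ x ∈ unitary (Lp ℂ 2 μ →L[ℂ] Lp ℂ 2 μ) := by
  have h0 : charRep μ χ hχ 0 = 1 := charRep_eq_one hχ fun k => AddChar.map_zero_eq_one _
  rw [Unitary.mem_iff, star_charRep, ← charRep_add, ← charRep_add, neg_add_cancel,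
    add_neg_cancel, h0]
  exact ⟨rfl, rfl⟩

theorem lipschitzWith_charRep [PseudoMetricSpace G] {K : NNReal}
    (hK : ∀ k, LipschitzWith K fun x => (χ k x : ℂ)) : LipschitzWith K (charRep μ χ hχ) := by
  refine LipschitzWith.of_dist_le_mul fun x y => ?_
  rw [dist_eq_norm]
  refine ContinuousLinearMap.opNorm_le_bound _ (by positivity) fun f => ?_
  refine Lp.norm_le_mul_norm_of_ae_le_mul ?_
  filter_upwards [Lp.coeFn_sub (charRep μ χ hχ x f) (charRep μ χ hχ y f),
    coeFn_charRep hχ x f, coeFn_charRep hχ y f] with k hsub hx hy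
  rw [sub_apply, hsub, Pi.sub_apply, hx, hy, ← sub_mul, norm_mul, ← dist_eq_norm]
  exact mul_le_mul_of_nonneg_right ((hK k).dist_le_mul x y) (norm_nonneg _)

theorem eq_zero_of_charRep_apply_eq_smul [NullSingletonClass μ] {u : ℕ → G}
    (hu : ∀ k k', (∀ n, χ k (u n) = χ k' (u n)) → k = k') {v : Lp ℂ 2 μ} {c : ℕ → ℂ}
    (hv : ∀ n, charRep μ χ hχ (u n) v = c n • v) : v = 0 := by
  have heigen : ∀ᵐ k ∂μ, ∀ n, (χ k (u n) : ℂ) * v k = c n * v k := ae_all_iff.2 fun n => by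
    filter_upwards [coeFn_charRep hχ (u n) v, hv n ▸ Lp.coeFn_smul (c n) v] with k h1 h2
    rw [← h1, h2, Pi.smul_apply, smul_eq_mul]
  -- on the support of `v` the eigenvalues `c n` pin down the point `k`
  have hsupp : {k | (∀ n, (χ k (u n) : ℂ) * v k = c n * v k) ∧ v k ≠ 0}.Subsingleton := by
    rintro k ⟨hk, hk0⟩ k' ⟨hk', hk'0⟩
    exact hu k k' fun n => Circle.ext <|
      ((mul_left_inj' hk0).1 (hk n)).trans ((mul_left_inj' hk'0).1 (hk' n)).symm
  refine Lp.eq_zero_iff_ae_eq_zero.2 ?_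
  filter_upwards [heigen, measure_eq_zero_iff_ae_notMem.1 (hsupp.measure_zero μ)] with k hk hk0
  exact not_not.1 fun h => hk0 ⟨hk, h⟩

end CharacterRepresentation

namespace WeakDual

variable {E : Type*} [NormedAddCommGroup E] [NormedSpace ℝ E]

def integralBall (Γ : Set E) (R : ℝ) : Set (WeakDual ℝ E) :=
  toStrongDual ⁻¹' ({α | ∀ γ ∈ Γ, ∃ n : ℤ, α γ = n} ∩ Metric.closedBall 0 R)

theorem isClosed_setOf_forall_exists_int (Γ : Set E) :
    IsClosed {α : WeakDual ℝ E | ∀ γ ∈ Γ, ∃ n : ℤ, α γ = n} := by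
  have : {α : WeakDual ℝ E | ∀ γ ∈ Γ, ∃ n : ℤ, α γ = n} =
      ⋂ γ ∈ Γ, (fun α : WeakDual ℝ E => α γ) ⁻¹' Set.range ((↑) : ℤ → ℝ) := by
    ext; simp [eq_comm]
  rw [this]
  exact isClosed_biInter fun γ _ =>
    Int.isClosedEmbedding_coe_real.isClosed_range.preimage (eval_continuous γ)

theorem isCompact_integralBall (Γ : Set E) (R : ℝ) : IsCompact (integralBall Γ R) :=
  (isCompact_closedBall (0 : StrongDual ℝ E) R).inter_left (isClosed_setOf_forall_exists_int Γ)

theorem exists_uncountable_integralBall {Γ : Set E}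
    (h : ¬ {α : StrongDual ℝ E | ∀ γ ∈ Γ, ∃ n : ℤ, α γ = n}.Countable) :
    ∃ R : ℝ≥0, Uncountable (integralBall Γ R) := by
  obtain ⟨R, hR⟩ := Set.exists_nat_not_countable_inter_closedBall h 0
  refine ⟨R, (uncountable_iff_not_countable _).2 fun hc => hR ?_⟩
  have := (Set.countable_coe_iff.1 hc).image toStrongDual
  rwa [integralBall, Set.image_preimage_eq _ toStrongDual.surjective, NNReal.coe_natCast] at this

noncomputable def fourierChar (α : WeakDual ℝ E) : AddChar E Circle :=
  𝐞.compAddMonoidHom (α : E →+ ℝ)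

theorem fourierChar_apply (α : WeakDual ℝ E) (x : E) : fourierChar α x = 𝐞 (α x) := rfl

theorem fourierChar_injective :
    Function.Injective (fourierChar : WeakDual ℝ E → AddChar E Circle) := by
  intro α β h
  refine DFunLike.ext _ _ fun x => ?_
  by_contra hx
  have hsub : α x - β x ≠ 0 := sub_ne_zero.2 hx
  set y := (2 * (α x - β x))⁻¹ • x
  have hy : α y - β y = 2⁻¹ := by
    simp only [y, map_smul, smul_eq_mul]
    field_simp
  have : 𝐞 (α y - β y) = 1 := by
    rw [AddChar.map_sub_eq_div, ← fourierChar_apply, ← fourierChar_apply, h, div_self']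
  rw [hy, Real.fourierChar_apply'] at this
  exact Circle.exp_pi_ne_one (by rwa [show 2 * Real.pi * 2⁻¹ = Real.pi by ring] at this)

theorem fourierChar_apply_eq_one {α : WeakDual ℝ E} {x : E} {n : ℤ} (h : α x = n) :
    fourierChar α x = 1 := by
  rw [fourierChar_apply, h, Real.fourierChar_apply', Circle.exp_two_pi_mul_int]

theorem continuous_fourierChar_apply_left (x : E) :
    Continuous fun α : WeakDual ℝ E => (fourierChar α x : ℂ) :=
  continuous_subtype_val.comp (Real.continuous_fourierChar.comp (eval_continuous x))

theorem lipschitzWith_fourierChar_apply {Γ : Set E} {R : ℝ≥0} {α : WeakDual ℝ E}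
    (hα : α ∈ integralBall Γ R) :
    LipschitzWith (2 * NNReal.pi * R) fun x => (fourierChar α x : ℂ) :=
  (Real.lipschitzWith_fourierChar.comp (toStrongDual α).lipschitz).weaken <|
    by gcongr; exact NNReal.coe_le_coe.1 (mem_closedBall_zero_iff.1 hα.2)

theorem eq_of_fourierChar_apply_eq {ι : Type*} {u : ι → E} (hu : DenseRange u)
    {α β : WeakDual ℝ E} (h : ∀ i, fourierChar α (u i) = fourierChar β (u i)) : α = β :=
  fourierChar_injective <| DFunLike.ext _ _ <| congrFun <|
    Continuous.ext_on hu (Real.continuous_fourierChar.comp α.continuous)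
      (Real.continuous_fourierChar.comp β.continuous) (Set.forall_mem_range.2 h)

end WeakDual

theorem stmt_7_general {z : Type} [NormedAddCommGroup z] [NormedSpace ℝ z]
    [TopologicalSpace.SeparableSpace z]
    (Γ : AddSubgroup z)
    (huncount : ¬ Set.Countable {α : z →L[ℝ] ℝ | ∀ γ ∈ Γ, ∃ n : ℤ, α γ = (n : ℝ)}) :
    ∃ (H : Type) (_ : NormedAddCommGroup H) (_ : InnerProductSpace ℂ H) (_ : CompleteSpace H)
      (π : z → (H →L[ℂ] H)),
      (∀ x, π x ∈ unitary (H →L[ℂ] H)) ∧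
      (∀ x y, π (x + y) = π x * π y) ∧
      (∀ γ ∈ Γ, π γ = 1) ∧
      Continuous π ∧
      Nontrivial H ∧
      ∀ (v : H) (c : z → ℂ), (∀ x, π x v = c x • v) → v = 0 := by
  obtain ⟨R, hSuncountable⟩ := WeakDual.exists_uncountable_integralBall huncount
  set S := WeakDual.integralBall (Γ : Set z) R
  have hS : IsCompact S := WeakDual.isCompact_integralBall _ _
  have := isCompact_iff_compactSpace.1 hS
  have := WeakDual.metrizable_of_isCompact ℝ z S hS
  have := TopologicalSpace.polishSpace_of_compactSpace S
  let : MeasurableSpace S := borel S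
  have : BorelSpace S := ⟨rfl⟩
  obtain ⟨μ, hμ, hμ0⟩ := exists_isProbabilityMeasure_nullSingletonClass S
  let χ : S → AddChar z Circle := fun k => WeakDual.fourierChar k
  have hχ : ∀ x, Measurable fun k => (χ k x : ℂ) := fun x =>
    ((WeakDual.continuous_fourierChar_apply_left x).comp continuous_subtype_val).measurable
  have hnontriv : Nontrivial (Lp ℂ 2 μ) :=
    nontrivial_of_ne (Lp.const 2 μ (1 : ℂ)) 0 fun h => by
      simpa [h] using Lp.norm_const 2 μ (1 : ℂ) two_ne_zero
  refine ⟨Lp ℂ 2 μ, inferInstance, inferInstance, inferInstance, charRep μ χ hχ,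
    charRep_mem_unitary hχ, charRep_add hχ,
    fun γ hγ => charRep_eq_one hχ fun k => ?_, (lipschitzWith_charRep hχ fun k =>
      WeakDual.lipschitzWith_fourierChar_apply k.2).continuous,
    hnontriv, fun v c hv => eq_zero_of_charRep_apply_eq_smul hχ (u := TopologicalSpace.denseSeq z)
      (fun k k' h => Subtype.ext ?_) fun n => hv _⟩
  · obtain ⟨n, hn⟩ := k.2.1 γ hγ
    exact WeakDual.fourierChar_apply_eq_one hn
  · exact WeakDual.eq_of_fourierChar_apply_eq (TopologicalSpace.denseRange_denseSeq z) h

/-- If `Z = z/Γ` is a separable connected abelian Banach–Lie group (`z` a separable Banach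
space, `Γ` a discrete subgroup) whose character group `{α ∈ z' : α(Γ) ⊆ ℤ}` is uncountable,
then `Z` admits a norm-continuous unitary representation with no nonzero eigenvector. -/
theorem stmt_7 {z : Type} [NormedAddCommGroup z] [NormedSpace ℝ z] [CompleteSpace z]
    [TopologicalSpace.SeparableSpace z]
    (Γ : AddSubgroup z) (hΓdisc : ∃ ε > 0, ∀ γ ∈ Γ, γ ≠ 0 → ε ≤ ‖γ‖)
    (huncount : ¬ Set.Countable {α : z →L[ℝ] ℝ | ∀ γ ∈ Γ, ∃ n : ℤ, α γ = (n : ℝ)}) :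
    ∃ (H : Type) (_ : NormedAddCommGroup H) (_ : InnerProductSpace ℂ H) (_ : CompleteSpace H)
      (π : z → (H →L[ℂ] H)),
      (∀ x, π x ∈ unitary (H →L[ℂ] H)) ∧
      (∀ x y, π (x + y) = π x * π y) ∧
      (∀ γ ∈ Γ, π γ = 1) ∧
      Continuous π ∧
      Nontrivial H ∧
      ∀ (v : H) (c : z → ℂ), (∀ x, π x v = c x • v) → v = 0 :=
  stmt_7_general Γ huncount
end

section
/- Let g be a semisimple Hilbert–Lie algebra with maximal abelian subalgebra t, root system Δ, and coroot set Δ^∨ bounded by C, i.e., ‖α^∨‖ ≤ C for all α ∈ Δ. If μ is a t-weight of a bounded representation that is nonzero on each simple ideal g_j for j in a finite set F (i.e., for each j ∈ F there is a root α_j of g_j with μ(α_j^∨) ≠ 0, and the α_j are mutually orthogonal), then ‖μ‖² ≥ |F| / C². In particular, a bounded representation π satisfies |F| ≤ C² ‖π‖² for such F. -/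
open scoped RealInnerProductSpace

/-- If the coroots are bounded by `C` and a weight `μ` takes a nonzero integral value on a
mutually orthogonal family of coroots `(v j)_{j ∈ F}`, then `‖μ‖² ≥ |F| / C²`; in particular,
if `‖μ‖ ≤ Cπ` (as holds for every weight of a bounded representation `π` with `Cπ = ‖π‖`),
then `|F| ≤ C² Cπ²`. -/
theorem stmt_8 {t : Type*} [NormedAddCommGroup t] [InnerProductSpace ℝ t]
    (μ : t →L[ℝ] ℝ) {J : Type*} (F : Finset J) (v : J → t) (C : ℝ) (hC : 0 < C)
    (hnorm : ∀ j ∈ F, ‖v j‖ ≤ C)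
    (horth : ∀ j ∈ F, ∀ k ∈ F, j ≠ k → ⟪v j, v k⟫ = 0)
    (hint : ∀ j ∈ F, ∃ n : ℤ, μ (v j) = (n : ℝ) ∧ n ≠ 0) :
    (F.card : ℝ) / C ^ 2 ≤ ‖μ‖ ^ 2
    ∧ ∀ Cπ : ℝ, ‖μ‖ ≤ Cπ → (F.card : ℝ) ≤ C ^ 2 * Cπ ^ 2 := by
  have hv0 : ∀ j ∈ F, v j ≠ 0 := by
    intro j hj h0
    obtain ⟨n, hn, hn0⟩ := hint j hj
    rw [h0, map_zero] at hn
    exact hn0 (by exact_mod_cast hn.symm)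
  have hvpos : ∀ j ∈ F, (0:ℝ) < ‖v j‖ ^ 2 := fun j hj => by
    have := norm_pos_iff.mpr (hv0 j hj); positivity
  have hterm : ∀ j ∈ F, 1 / C ^ 2 ≤ μ (v j) ^ 2 / ‖v j‖ ^ 2 := by
    intro j hj
    obtain ⟨n, hn, hn0⟩ := hint j hj
    have h1 : (1:ℝ) ≤ μ (v j) ^ 2 := by
      rw [hn]
      have h : (1:ℤ) ≤ n ^ 2 := by
        rcases lt_or_gt_of_ne hn0 with h | h <;> nlinarith
      exact_mod_cast h
    have h2 : ‖v j‖ ^ 2 ≤ C ^ 2 := by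
      have := hnorm j hj; nlinarith [norm_nonneg (v j)]
    have hv := hvpos j hj
    rw [div_le_div_iff₀ (by positivity) hv]
    nlinarith
  set S : ℝ := ∑ j ∈ F, μ (v j) ^ 2 / ‖v j‖ ^ 2 with hS
  have hcard : (F.card : ℝ) / C ^ 2 ≤ S := by
    calc (F.card : ℝ) / C ^ 2 = ∑ _j ∈ F, 1 / C ^ 2 := by
          rw [Finset.sum_const, nsmul_eq_mul]; ring
      _ ≤ S := Finset.sum_le_sum hterm
  have hSle : S ≤ ‖μ‖ ^ 2 := by
    set u : t := ∑ j ∈ F, (μ (v j) / ‖v j‖ ^ 2) • v j with hu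
    have hμu : μ u = S := by
      rw [hu, map_sum]
      refine Finset.sum_congr rfl fun j hj => ?_
      rw [map_smul]; field_simp; ring
    have huu : ⟪u, u⟫ = S := by
      rw [hu, inner_sum]
      refine Finset.sum_congr rfl fun j hj => ?_
      rw [sum_inner]
      rw [Finset.sum_eq_single j]
      · rw [real_inner_smul_left, real_inner_smul_right, real_inner_self_eq_norm_sq]
        have hv := hvpos j hj
        field_simp
      · intro k hk hkj
        rw [real_inner_smul_left, real_inner_smul_right, horth k hk j hj hkj]
        ring
      · intro h; exact absurd hj h
    have hnu : ‖u‖ ^ 2 = S := by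
      rw [← real_inner_self_eq_norm_sq, huu]
    rcases eq_or_lt_of_le (by positivity : (0:ℝ) ≤ ‖u‖) with h0 | h0
    · have : S = 0 := by rw [← hnu, ← h0]; ring
      rw [this]; positivity
    · have hb : μ u ≤ ‖μ‖ * ‖u‖ := by
        calc μ u ≤ |μ u| := le_abs_self _
          _ = ‖μ u‖ := (Real.norm_eq_abs _).symm
          _ ≤ ‖μ‖ * ‖u‖ := μ.le_opNorm u
      have hle : ‖u‖ ≤ ‖μ‖ := by
        have : ‖u‖ * ‖u‖ ≤ ‖μ‖ * ‖u‖ := by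
          calc ‖u‖ * ‖u‖ = S := by nlinarith
            _ = μ u := hμu.symm
            _ ≤ ‖μ‖ * ‖u‖ := hb
        exact le_of_mul_le_mul_right this h0
      calc S = ‖u‖ ^ 2 := hnu.symm
        _ ≤ ‖μ‖ ^ 2 := by nlinarith [norm_nonneg u, norm_nonneg μ]
  have h1 : (F.card : ℝ) / C ^ 2 ≤ ‖μ‖ ^ 2 := hcard.trans hSle
  refine ⟨h1, fun Cπ hμπ => ?_⟩
  have h2 : ‖μ‖ ^ 2 ≤ Cπ ^ 2 := by nlinarith [norm_nonneg μ]
  have h3 : (F.card : ℝ) / C ^ 2 ≤ Cπ ^ 2 := h1.trans h2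
  rw [div_le_iff₀ (by positivity)] at h3
  nlinarith
end

section
/- Let (T_t)_{t≥0} be a strongly continuous one-parameter semigroup on a Banach space E with generator A, and B ∈ B(E) a bounded operator. Then the semigroup (U_t) generated by A + B satisfies the Trotter product formula U_t x = lim_{n→∞} (T_{t/n} e^{tB/n})^n x for every x ∈ E. -/
/-!
Chernoff's argument. For `x` in the core `dom` the orbit `{U s x | s ∈ [0, t]}` is compact, and
along it both `U h` and the Trotter step `V h = T h ∘ exp (h • B)` are `1 + h (A + B) + o(h)`,
uniformly; the `o(h)` for `T h` comes from the mean value theorem, using that `T r → 1` uniformly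
on compact sets. Telescoping `U t x - V (t / n) ^ n x` along the orbit bounds the error by
`n · o(t / n) → 0`, provided the powers `V h ^ j`, `j h ≤ t`, are uniformly bounded. This
stability holds because in the equivalent seminorm `sup_s e^{-ω s} ‖T s x‖` the operator `T h`
has norm at most `e^{ω h}` and `exp (h • B)` at most `e^{h M ‖B‖}`. Uniform boundedness then
carries the convergence from the dense core to all of `E`.
-/

open Filter Set Topology
open scoped Pointwise

theorem natCast_mul_div_natCast_le {t : ℝ} (ht : 0 ≤ t) {j n : ℕ} (hjn : j ≤ n) :
    (j : ℝ) * (t / n) ≤ t := by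
  rcases Nat.eq_zero_or_pos n with rfl | hn
  · simpa using ht
  · calc (j : ℝ) * (t / n) ≤ n * (t / n) := by gcongr
      _ = t := mul_div_cancel₀ t (by positivity)

section OperatorFamilies

variable {E F : Type*} [NormedAddCommGroup E] [NormedSpace ℝ E]
  [NormedAddCommGroup F] [NormedSpace ℝ F]

theorem exists_norm_le_of_continuousOn [CompleteSpace E] {X : Type*} [TopologicalSpace X]
    {S : Set X} (hS : IsCompact S) {T : X → E →L[ℝ] F}
    (hT : ∀ x, ContinuousOn (fun s => T s x) S) : ∃ M, ∀ s ∈ S, ‖T s‖ ≤ M := by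
  obtain ⟨M, hM⟩ := banach_steinhaus (g := fun s : S => T s) fun x => by
    obtain ⟨C, hC⟩ := hS.exists_bound_of_continuousOn (hT x)
    exact ⟨C, fun s => hC s s.2⟩
  exact ⟨M, fun s hs => hM ⟨s, hs⟩⟩

theorem tendsto_apply_of_dense {ι : Type*} {l : Filter ι} {T : ι → E →L[ℝ] F}
    {G : E →L[ℝ] F} {C : ℝ} (hT : ∀ i, ‖T i‖ ≤ C) {D : Set E} (hD : Dense D)
    (h : ∀ x ∈ D, Tendsto (fun i => T i x) l (𝓝 (G x))) (x : E) :
    Tendsto (fun i => T i x) l (𝓝 (G x)) := by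
  have hequi : Equicontinuous fun i => ⇑(T i) :=
    (LipschitzWith.uniformEquicontinuous _ C.toNNReal fun i => (T i).lipschitz.weaken <| by
      simpa [← NNReal.coe_le_coe] using (hT i).trans (le_max_left C 0)).equicontinuous
  exact (hequi.isClosed_setOfPred_tendsto G.continuous).closure_subset_iff.2 h (hD x)

theorem tendsto_apply_prod_of_norm_le {ι : Type*} {l : Filter ι} {T : ι → E →L[ℝ] F}
    {G : E →L[ℝ] F} {C : ℝ} (hT : ∀ᶠ i in l, ‖T i‖ ≤ C) {x : E}
    (hx : Tendsto (fun i => T i x) l (𝓝 (G x))) :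
    Tendsto (fun p : ι × E => T p.1 p.2) (l ×ˢ 𝓝 x) (𝓝 (G x)) := by
  rw [tendsto_iff_norm_sub_tendsto_zero]
  have hlim : Tendsto (fun p : ι × E => C * ‖p.2 - x‖ + ‖T p.1 x - G x‖) (l ×ˢ 𝓝 x) (𝓝 0) := by
    have h1 : Tendsto (fun p : ι × E => ‖p.2 - x‖) (l ×ˢ 𝓝 x) (𝓝 0) := by
      simpa using ((tendsto_snd (f := l) (g := 𝓝 x)).sub_const x).norm
    simpa using (h1.const_mul C).add ((tendsto_iff_norm_sub_tendsto_zero.1 hx).comp tendsto_fst)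
  refine squeeze_zero' (Eventually.of_forall fun _ => norm_nonneg _) ?_ hlim
  filter_upwards [hT.prod_inl (𝓝 x)] with p hp
  calc ‖T p.1 p.2 - G x‖ = ‖T p.1 (p.2 - x) + (T p.1 x - G x)‖ := by rw [map_sub]; abel_nf
    _ ≤ ‖T p.1‖ * ‖p.2 - x‖ + ‖T p.1 x - G x‖ :=
      (norm_add_le _ _).trans (by gcongr; exact (T p.1).le_opNorm _)
    _ ≤ C * ‖p.2 - x‖ + ‖T p.1 x - G x‖ := by gcongr

theorem tendstoUniformlyOn_of_norm_le {ι : Type*} {l : Filter ι} {T : ι → E →L[ℝ] F}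
    {G : E →L[ℝ] F} {C : ℝ} (hT : ∀ᶠ i in l, ‖T i‖ ≤ C)
    (h : ∀ x, Tendsto (fun i => T i x) l (𝓝 (G x))) {K : Set E} (hK : IsCompact K) :
    TendstoUniformlyOn (fun i => ⇑(T i)) G l K := by
  refine (tendstoLocallyUniformlyOn_iff_tendstoUniformlyOn_of_compact hK).1 <|
    TendstoLocallyUniformly.tendstoLocallyUniformlyOn <|
      tendstoLocallyUniformly_iff_forall_tendsto.2 fun x => ?_
  exact (((G.continuous.tendsto x).comp tendsto_snd).prodMk_nhds
    (tendsto_apply_prod_of_norm_le hT (h x))).mono_right (nhds_le_uniformity _)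

theorem norm_pow_apply_sub_pow_apply_le (P Q : E →L[ℝ] E) (x : E) {C δ : ℝ} (n : ℕ)
    (hQ : ∀ j < n, ‖Q ^ j‖ ≤ C) (hPQ : ∀ j < n, ‖P ((P ^ j) x) - Q ((P ^ j) x)‖ ≤ δ) :
    ‖(P ^ n) x - (Q ^ n) x‖ ≤ n * (C * δ) := by
  induction n generalizing x with
  | zero => simp
  | succ n ih =>
    have hsplit : (P ^ (n + 1)) x - (Q ^ (n + 1)) x
        = ((P ^ n) (P x) - (Q ^ n) (P x)) + (Q ^ n) (P x - Q x) := by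
      simp only [pow_succ, mul_apply_eq_comp, map_sub]; abel
    have hfirst : ‖(P ^ n) (P x) - (Q ^ n) (P x)‖ ≤ n * (C * δ) := by
      refine ih (P x) (fun j hj => hQ j (by omega)) fun j hj => ?_
      simpa only [pow_succ, mul_apply_eq_comp] using hPQ (j + 1) (by omega)
    have hlast : ‖(Q ^ n) (P x - Q x)‖ ≤ C * δ :=
      ((Q ^ n).le_opNorm _).trans <| mul_le_mul (hQ n n.lt_succ_self)
        (by simpa using hPQ 0 n.succ_pos) (norm_nonneg _)
        ((norm_nonneg _).trans (hQ n n.lt_succ_self))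
    rw [hsplit]
    calc _ ≤ ‖(P ^ n) (P x) - (Q ^ n) (P x)‖ + ‖(Q ^ n) (P x - Q x)‖ := norm_add_le _ _
      _ ≤ n * (C * δ) + C * δ := add_le_add hfirst hlast
      _ = (n + 1 : ℕ) * (C * δ) := by push_cast; ring

end OperatorFamilies

namespace Seminorm

variable {E : Type*} [NormedAddCommGroup E] [NormedSpace ℝ E]

theorem continuous_of_le_mul_norm (p : Seminorm ℝ E) {M : ℝ} (hp : ∀ x, p x ≤ M * ‖x‖) :
    Continuous p := by
  refine Seminorm.continuous_of_continuousAt_zero ?_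
  rw [ContinuousAt, map_zero]
  exact squeeze_zero (fun x => apply_nonneg p x) hp
    (by simpa using (continuous_norm.tendsto (0 : E)).const_mul M)

theorem apply_pow_apply_le (p : Seminorm ℝ E) {L : E →L[ℝ] E} {c : ℝ} (hc : 0 ≤ c)
    (hL : ∀ x, p (L x) ≤ c * p x) (k : ℕ) (x : E) : p ((L ^ k) x) ≤ c ^ k * p x := by
  induction k with
  | zero => simp
  | succ k ih =>
    rw [pow_succ', mul_apply_eq_comp, pow_succ', mul_assoc]
    exact (hL _).trans (mul_le_mul_of_nonneg_left ih hc)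

theorem apply_exp_apply_le [CompleteSpace E] (p : Seminorm ℝ E) (hp : Continuous p)
    {L : E →L[ℝ] E} {c : ℝ} (hc : 0 ≤ c) (hL : ∀ x, p (L x) ≤ c * p x) (x : E) :
    p (NormedSpace.exp L x) ≤ Real.exp c * p x := by
  have hterm : ∀ k : ℕ,
      p (((k.factorial : ℝ)⁻¹ • L ^ k) x) ≤ (k.factorial : ℝ)⁻¹ • c ^ k * p x := by
    intro k
    rw [smul_apply, map_smul_eq_mul, Real.norm_eq_abs,
      abs_of_nonneg (by positivity), smul_eq_mul, mul_assoc]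
    exact mul_le_mul_of_nonneg_left (p.apply_pow_apply_le hc hL k x) (by positivity)
  have hL_sum := (NormedSpace.exp_series_hasSum_exp' (𝕂 := ℝ) L).mapL
    (ContinuousLinearMap.apply ℝ E x)
  have hc_sum := (NormedSpace.exp_series_hasSum_exp' (𝕂 := ℝ) c).mul_right (p x)
  rw [← Real.exp_eq_exp_ℝ] at hc_sum
  refine le_of_tendsto_of_tendsto' ((hp.tendsto _).comp hL_sum.tendsto_sum_nat)
    hc_sum.tendsto_sum_nat fun m => ?_
  exact (Finset.le_sum_of_subadditive p (map_zero p).le (map_add_le_add p) _ _).trans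
    (Finset.sum_le_sum fun k _ => hterm k)

theorem norm_pow_apply_le (p : Seminorm ℝ E) {M c : ℝ} (hle : ∀ x, ‖x‖ ≤ p x)
    (hge : ∀ x, p x ≤ M * ‖x‖) {L : E →L[ℝ] E} (hc : 0 ≤ c) (hL : ∀ x, p (L x) ≤ c * p x)
    (k : ℕ) (x : E) : ‖(L ^ k) x‖ ≤ M * c ^ k * ‖x‖ :=
  calc ‖(L ^ k) x‖ ≤ c ^ k * p x := (hle _).trans (p.apply_pow_apply_le hc hL k x)
    _ ≤ c ^ k * (M * ‖x‖) := by gcongr; exact hge x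
    _ = M * c ^ k * ‖x‖ := by ring

end Seminorm

section Semigroups

variable {E : Type*} [NormedAddCommGroup E] [NormedSpace ℝ E]

structure IsOperatorSemigroup (T : ℝ → E →L[ℝ] E) : Prop where
  map_zero : T 0 = 1
  map_add : ∀ s t : ℝ, 0 ≤ s → 0 ≤ t → T (s + t) = T s ∘L T t

structure IsC0Semigroup (T : ℝ → E →L[ℝ] E) : Prop extends IsOperatorSemigroup T where
  continuousOn : ∀ x, ContinuousOn (fun t => T t x) (Ici 0)

namespace IsOperatorSemigroup

variable {T : ℝ → E →L[ℝ] E} (hT : IsOperatorSemigroup T)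
include hT

theorem pow_eq {h : ℝ} (hh : 0 ≤ h) (n : ℕ) : T h ^ n = T (n * h) := by
  induction n with
  | zero => simp [hT.map_zero]
  | succ n ih =>
    rw [pow_succ, ih, ContinuousLinearMap.mul_def, ← hT.map_add _ _ (by positivity) hh]
    push_cast; ring_nf

theorem hasDerivWithinAt_Ici {y d : E} (hd : HasDerivWithinAt (fun s => T s y) d (Ici 0) 0)
    {r : ℝ} (hr : 0 ≤ r) : HasDerivWithinAt (fun s => T s y) (T r d) (Ici r) r := by
  have hshift : HasDerivWithinAt (fun s => T (s - r) y) d (Ici r) r := by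
    simpa [Function.comp_def] using
      HasDerivWithinAt.scomp (t' := Ici 0) r (by simpa using hd)
        ((hasDerivWithinAt_id r (Ici r)).sub_const r) fun s hs => sub_nonneg.2 hs
  refine ((T r).hasFDerivAt.comp_hasDerivWithinAt r hshift).congr (fun s hs => ?_) ?_
  · rw [Function.comp_apply, ← ContinuousLinearMap.comp_apply,
      ← hT.map_add r (s - r) hr (sub_nonneg.2 hs), add_sub_cancel]
  · simp [hT.map_zero]

theorem eq_apply_of_hasDerivWithinAt {y d d' : E}
    (hd : HasDerivWithinAt (fun s => T s y) d (Ici 0) 0) {r : ℝ} (hr : 0 ≤ r)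
    (hd' : HasDerivWithinAt (fun s => T s y) d' (Ici 0) r) : d' = T r d :=
  (uniqueDiffOn_Ici r r self_mem_Ici).eq_deriv _ (hd'.mono (Ici_subset_Ici.2 hr))
    (hT.hasDerivWithinAt_Ici hd hr)

theorem tendsto_pow_apply_of_consistent (V : ℝ → E →L[ℝ] E) {t C : ℝ} (ht : 0 ≤ t)
    (hV : ∀ h, 0 ≤ h → ∀ j : ℕ, j * h ≤ t → ‖V h ^ j‖ ≤ C) {x : E}
    (hUV : ∀ ε > 0, ∀ᶠ h in 𝓝[≥] 0, ∀ s ∈ Icc 0 t, ‖T h (T s x) - V h (T s x)‖ ≤ ε * h) :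
    Tendsto (fun n : ℕ => (V (t / n) ^ n) x) atTop (𝓝 (T t x)) := by
  have hC : 0 ≤ C := (norm_nonneg _).trans (hV 0 le_rfl 0 (by simpa using ht))
  have hstep : Tendsto (fun n : ℕ => t / n) atTop (𝓝[≥] 0) :=
    tendsto_nhdsWithin_iff.2 ⟨tendsto_const_div_atTop_nhds_zero_nat t,
      Eventually.of_forall fun n => div_nonneg ht n.cast_nonneg⟩
  refine Metric.tendsto_nhds.2 fun ε hε => ?_
  set η := ε / (C * t + 1)
  filter_upwards [hstep.eventually (hUV η (by positivity)), eventually_ne_atTop 0] with n hn hn0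
  have hh : 0 ≤ t / n := by positivity
  have hnt : (n : ℝ) * (t / n) = t := mul_div_cancel₀ t (by exact_mod_cast hn0)
  have htel := norm_pow_apply_sub_pow_apply_le (T (t / n)) (V (t / n)) x n
    (fun j hj => hV _ hh j (natCast_mul_div_natCast_le ht hj.le)) fun j hj => by
      rw [hT.pow_eq hh]
      exact hn _ ⟨by positivity, natCast_mul_div_natCast_le ht hj.le⟩
  rw [hT.pow_eq hh, hnt] at htel
  rw [dist_eq_norm, norm_sub_rev]
  calc _ ≤ n * (C * (η * (t / n))) := htel
    _ = C * η * (n * (t / n)) := by ring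
    _ = C * t * η := by rw [hnt]; ring
    _ < ε := by
      rw [mul_div_assoc', div_lt_iff₀ (by positivity)]
      nlinarith

end IsOperatorSemigroup

end Semigroups

section C0Semigroups

variable {E : Type*} [NormedAddCommGroup E] [NormedSpace ℝ E]

/-- `sup_{s ≥ 0} e^{-ω s} ‖T s x‖`; a junk value unless `‖T s‖ ≤ M e^{ω s}` for `s ≥ 0`. -/
noncomputable def expWeightedSupSeminorm (T : ℝ → E →L[ℝ] E) (ω : ℝ) : Seminorm ℝ E :=
  ⨆ s : Ici (0 : ℝ), (normSeminorm ℝ E).comp (Real.exp (-(ω * s)) • T s).toLinearMap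

section expWeightedSupSeminorm

variable {T : ℝ → E →L[ℝ] E} {M ω : ℝ} (hM : ∀ s, 0 ≤ s → ‖T s‖ ≤ M * Real.exp (ω * s))
include hM

theorem exp_neg_mul_mul_norm_apply_le (x : E) {s : ℝ} (hs : 0 ≤ s) :
    Real.exp (-(ω * s)) * ‖T s x‖ ≤ M * ‖x‖ :=
  calc Real.exp (-(ω * s)) * ‖T s x‖ ≤ Real.exp (-(ω * s)) * (M * Real.exp (ω * s) * ‖x‖) := by
        gcongr; exact (T s).le_of_opNorm_le (hM s hs) x
    _ = M * ‖x‖ := by rw [← mul_assoc, mul_left_comm, ← Real.exp_add]; simp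

theorem expWeightedSupSeminorm_apply (x : E) :
    expWeightedSupSeminorm T ω x = ⨆ s : Ici (0 : ℝ), Real.exp (-(ω * s)) * ‖T s x‖ := by
  refine (Seminorm.iSup_apply (Seminorm.bddAbove_range_iff.2 fun x => ⟨M * ‖x‖, ?_⟩)).trans ?_
  · rintro _ ⟨s, rfl⟩
    simpa [norm_smul, abs_of_pos (Real.exp_pos _)] using exp_neg_mul_mul_norm_apply_le hM x s.2
  · simp [norm_smul, abs_of_pos (Real.exp_pos _)]

theorem le_expWeightedSupSeminorm (x : E) {s : ℝ} (hs : 0 ≤ s) :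
    Real.exp (-(ω * s)) * ‖T s x‖ ≤ expWeightedSupSeminorm T ω x := by
  rw [expWeightedSupSeminorm_apply hM]
  exact le_ciSup (f := fun s : Ici (0 : ℝ) => Real.exp (-(ω * s)) * ‖T s x‖)
    ⟨M * ‖x‖, by rintro _ ⟨s, rfl⟩; exact exp_neg_mul_mul_norm_apply_le hM x s.2⟩ ⟨s, hs⟩

theorem expWeightedSupSeminorm_le (x : E) : expWeightedSupSeminorm T ω x ≤ M * ‖x‖ := by
  rw [expWeightedSupSeminorm_apply hM]
  exact ciSup_le fun s => exp_neg_mul_mul_norm_apply_le hM x s.2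

theorem norm_le_expWeightedSupSeminorm (h0 : T 0 = 1) (x : E) :
    ‖x‖ ≤ expWeightedSupSeminorm T ω x := by
  simpa [h0] using le_expWeightedSupSeminorm hM x le_rfl

theorem expWeightedSupSeminorm_apply_apply_le (hT : IsOperatorSemigroup T) {h : ℝ} (hh : 0 ≤ h)
    (x : E) :
    expWeightedSupSeminorm T ω (T h x) ≤ Real.exp (ω * h) * expWeightedSupSeminorm T ω x := by
  rw [expWeightedSupSeminorm_apply hM (T h x)]
  refine ciSup_le fun s => ?_
  calc Real.exp (-(ω * s)) * ‖T s (T h x)‖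
      = Real.exp (ω * h) * (Real.exp (-(ω * (s + h))) * ‖T (s + h) x‖) := by
        rw [hT.map_add _ _ s.2 hh, ContinuousLinearMap.comp_apply, ← mul_assoc, ← Real.exp_add]
        ring_nf
    _ ≤ Real.exp (ω * h) * expWeightedSupSeminorm T ω x := by
        gcongr; exact le_expWeightedSupSeminorm hM x (add_nonneg s.2 hh)

theorem expWeightedSupSeminorm_trotter_le [CompleteSpace E] (hT : IsOperatorSemigroup T)
    (B : E →L[ℝ] E) {h : ℝ} (hh : 0 ≤ h) (x : E) :
    expWeightedSupSeminorm T ω ((T h ∘L NormedSpace.exp (h • B)) x)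
      ≤ Real.exp ((ω + M * ‖B‖) * h) * expWeightedSupSeminorm T ω x := by
  set p := expWeightedSupSeminorm T ω
  have hM0 : 0 ≤ M := (norm_nonneg _).trans (by simpa using hM 0 le_rfl)
  have hpB : ∀ x, p ((h • B) x) ≤ h * (M * ‖B‖) * p x := fun x =>
    calc p ((h • B) x) = h * p (B x) := by
          rw [smul_apply, map_smul_eq_mul, Real.norm_eq_abs, abs_of_nonneg hh]
      _ ≤ h * (M * (‖B‖ * ‖x‖)) := by
          gcongr; exact (expWeightedSupSeminorm_le hM _).trans (by gcongr; exact B.le_opNorm x)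
      _ = h * (M * ‖B‖) * ‖x‖ := by ring
      _ ≤ h * (M * ‖B‖) * p x := by
          gcongr; exact norm_le_expWeightedSupSeminorm hM hT.map_zero x
  calc p ((T h ∘L NormedSpace.exp (h • B)) x)
      ≤ Real.exp (ω * h) * p (NormedSpace.exp (h • B) x) :=
        expWeightedSupSeminorm_apply_apply_le hM hT hh _
    _ ≤ Real.exp (ω * h) * (Real.exp (h * (M * ‖B‖)) * p x) := by
        gcongr
        exact p.apply_exp_apply_le (p.continuous_of_le_mul_norm (expWeightedSupSeminorm_le hM))
          (by positivity) hpB x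
    _ = Real.exp ((ω + M * ‖B‖) * h) * p x := by rw [← mul_assoc, ← Real.exp_add]; ring_nf

end expWeightedSupSeminorm

namespace IsC0Semigroup

variable {T : ℝ → E →L[ℝ] E} (hT : IsC0Semigroup T)
include hT

theorem norm_apply_sub_sub_smul_le {y d : E} (hd : HasDerivWithinAt (fun s => T s y) d (Ici 0) 0)
    {h ε : ℝ} (hh : 0 ≤ h) (hε : ∀ r ∈ Icc 0 h, ‖T r d - d‖ ≤ ε) :
    ‖T h y - y - h • d‖ ≤ ε * h := by
  have hmvt := norm_image_sub_le_of_norm_deriv_right_le_segment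
    (f := fun r => T r y - r • d) (f' := fun r => T r d - d)
    (((hT.continuousOn y).mono Icc_subset_Ici_self).sub (continuousOn_id.smul continuousOn_const))
    (fun r hr => (hT.hasDerivWithinAt_Ici hd hr.1).sub
      (by simpa using (hasDerivWithinAt_id r (Ici r)).smul_const d))
    (fun r hr => hε r (Ico_subset_Icc_self hr)) h ⟨hh, le_rfl⟩
  simpa [hT.map_zero, sub_right_comm] using hmvt

theorem isCompact_image_orbit (G : E → E) {y : E} (t : ℝ)
    (hG : ∀ s, 0 ≤ s → HasDerivWithinAt (fun r => T r y) (G (T s y)) (Ici 0) s) :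
    IsCompact (G '' ((fun s => T s y) '' Icc 0 t)) := by
  have hG0 : HasDerivWithinAt (fun r => T r y) (G y) (Ici 0) 0 := by
    simpa [hT.map_zero] using hG 0 le_rfl
  rw [image_image, image_congr fun s hs => hT.eq_apply_of_hasDerivWithinAt hG0 hs.1 (hG s hs.1)]
  exact isCompact_Icc.image_of_continuousOn ((hT.continuousOn _).mono Icc_subset_Ici_self)

theorem exists_norm_le [CompleteSpace E] (c : ℝ) : ∃ M, 1 ≤ M ∧ ∀ s ∈ Icc 0 c, ‖T s‖ ≤ M := by
  obtain ⟨M, hM⟩ := exists_norm_le_of_continuousOn isCompact_Icc fun x =>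
    (hT.continuousOn x).mono Icc_subset_Ici_self
  exact ⟨max M 1, le_max_right M 1, fun s hs => (hM s hs).trans (le_max_left M 1)⟩

theorem exists_norm_le_mul_exp [CompleteSpace E] :
    ∃ M ω, 1 ≤ M ∧ 0 ≤ ω ∧ ∀ s, 0 ≤ s → ‖T s‖ ≤ M * Real.exp (ω * s) := by
  obtain ⟨M, hM1, hM⟩ := hT.exists_norm_le 1
  refine ⟨M, Real.log M, hM1, Real.log_nonneg hM1, fun s hs => ?_⟩
  set n := ⌈s⌉₊
  have hsn : s / n ∈ Icc (0 : ℝ) 1 :=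
    ⟨by positivity, div_le_one_of_le₀ (Nat.le_ceil s) (by positivity)⟩
  have hpow : ‖T s‖ ≤ M ^ n := by
    rcases Nat.eq_zero_or_pos n with hn | hn
    · rw [hn, le_antisymm (Nat.ceil_eq_zero.1 hn) hs, hT.map_zero, pow_zero]
      exact ContinuousLinearMap.norm_id_le
    · rw [← mul_div_cancel₀ s (show (n : ℝ) ≠ 0 by positivity), ← hT.pow_eq hsn.1]
      exact (norm_pow_le' _ hn).trans (pow_le_pow_left₀ (norm_nonneg _) (hM _ hsn) n)
  calc ‖T s‖ ≤ M ^ (n : ℝ) := by rwa [Real.rpow_natCast]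
    _ ≤ M ^ (s + 1) := Real.rpow_le_rpow_of_exponent_le hM1 (Nat.ceil_lt_add_one hs).le
    _ = M * Real.exp (Real.log M * s) := by
      rw [Real.rpow_add_one (by positivity), Real.rpow_def_of_pos (by positivity), mul_comm]

theorem exists_norm_trotter_pow_le [CompleteSpace E] (B : E →L[ℝ] E) (t : ℝ) :
    ∃ C, ∀ h, 0 ≤ h → ∀ j : ℕ, j * h ≤ t → ‖(T h ∘L NormedSpace.exp (h • B)) ^ j‖ ≤ C := by
  obtain ⟨M, ω, hM1, hω, hM⟩ := hT.exists_norm_le_mul_exp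
  set κ := ω + M * ‖B‖
  refine ⟨M * Real.exp (κ * t), fun h hh j hj =>
    ContinuousLinearMap.opNorm_le_bound _ (by positivity) fun x => ?_⟩
  refine ((expWeightedSupSeminorm T ω).norm_pow_apply_le
    (norm_le_expWeightedSupSeminorm hM hT.map_zero) (expWeightedSupSeminorm_le hM)
    (Real.exp_nonneg _) (expWeightedSupSeminorm_trotter_le hM hT.toIsOperatorSemigroup B hh)
    j x).trans ?_
  have hjt : (j : ℝ) * (κ * h) ≤ κ * t :=
    calc (j : ℝ) * (κ * h) = κ * (j * h) := by ring
      _ ≤ κ * t := by gcongr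
  rw [← Real.exp_nat_mul]
  gcongr

end IsC0Semigroup

end C0Semigroups

section Consistency

variable {E : Type*} [NormedAddCommGroup E] [NormedSpace ℝ E] [CompleteSpace E]

namespace IsC0Semigroup

variable {T : ℝ → E →L[ℝ] E} (hT : IsC0Semigroup T)
include hT

theorem tendstoUniformlyOn {K : Set E} (hK : IsCompact K) :
    TendstoUniformlyOn (fun r => ⇑(T r)) id (𝓝[≥] 0) K := by
  obtain ⟨M, -, hM⟩ := hT.exists_norm_le 1
  have hbound : ∀ᶠ r in 𝓝[≥] (0 : ℝ), ‖T r‖ ≤ M :=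
    eventually_of_mem (Icc_mem_nhdsGE one_pos) hM
  have hpt : ∀ x, Tendsto (fun r => T r x) (𝓝[≥] 0) (𝓝 (ContinuousLinearMap.id ℝ E x)) :=
    fun x => by simpa [hT.map_zero] using (hT.continuousOn x 0 self_mem_Ici).tendsto
  simpa using tendstoUniformlyOn_of_norm_le hbound hpt hK

theorem eventually_forall_Icc_norm_sub_le {K : Set E} (hK : IsCompact K) {ε : ℝ} (hε : 0 < ε) :
    ∀ᶠ h in 𝓝[≥] 0, ∀ r ∈ Icc 0 h, ∀ z ∈ K, ‖T r z - z‖ ≤ ε := by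
  have hIcc : Tendsto (fun h : ℝ => Icc 0 h) (𝓝[≥] 0) (𝓝[≥] 0).smallSets :=
    Tendsto.Icc (tendsto_nhdsWithin_of_tendsto_nhds_of_eventually_within _ tendsto_const_nhds
      (Eventually.of_forall fun _ => self_mem_Ici)) tendsto_id
  refine hIcc.eventually (eventually_smallSets_forall.2 ?_)
  filter_upwards [Metric.tendstoUniformlyOn_iff.1 (hT.tendstoUniformlyOn hK) ε hε] with r hr z hz
  simpa [dist_eq_norm, norm_sub_rev] using (hr z hz).le

theorem eventually_norm_apply_sub_sub_smul_le {K : Set E} (hK : IsCompact K) {ε : ℝ} (hε : 0 < ε) :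
    ∀ᶠ h in 𝓝[≥] 0, ∀ y, ∀ d ∈ K, HasDerivWithinAt (fun s => T s y) d (Ici 0) 0 →
      ‖T h y - y - h • d‖ ≤ ε * h := by
  filter_upwards [self_mem_nhdsWithin, hT.eventually_forall_Icc_norm_sub_le hK hε]
    with h hh hunif y d hdK hd
  exact hT.norm_apply_sub_sub_smul_le hd hh fun r hr => hunif r hr d hdK

theorem eventually_norm_apply_exp_sub_le (B : E →L[ℝ] E) {K : Set E} (hK : IsCompact K)
    {ε : ℝ} (hε : 0 < ε) :
    ∀ᶠ h in 𝓝[≥] 0, ∀ y ∈ K,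
      ‖T h (NormedSpace.exp (h • B) y) - T h y - h • B y‖ ≤ ε * h := by
  obtain ⟨M, hM1, hM⟩ := hT.exists_norm_le 1
  obtain ⟨R, hR0, hR⟩ := hK.isBounded.exists_pos_norm_le
  have hexp : ∀ᶠ h in 𝓝 (0 : ℝ),
      ‖NormedSpace.exp (h • B) - 1 - h • B‖ ≤ ε / (2 * M * R) * ‖h‖ := by
    simpa using (hasDerivAt_iff_isLittleO.1 (hasDerivAt_exp_smul_const (𝕂 := ℝ) B 0)).def
      (by positivity : 0 < ε / (2 * M * R))
  filter_upwards [self_mem_nhdsWithin, Icc_mem_nhdsGE one_pos, nhdsWithin_le_nhds hexp,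
    hT.eventually_forall_Icc_norm_sub_le (hK.image B.continuous) (half_pos hε)]
    with h hh hh1 hexp hunif y hy
  rw [mem_Ici] at hh
  have hrem : ‖T h ((NormedSpace.exp (h • B) - 1 - h • B) y)‖ ≤ ε / 2 * h :=
    calc _ ≤ M * ‖(NormedSpace.exp (h • B) - 1 - h • B) y‖ := (T h).le_of_opNorm_le (hM h hh1) _
      _ ≤ M * (ε / (2 * M * R) * h * R) := by
          gcongr
          refine ((NormedSpace.exp (h • B) - 1 - h • B).le_of_opNorm_le
            (c := ε / (2 * M * R) * h) (by simpa [abs_of_nonneg hh] using hexp) y).trans ?_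
          gcongr; exact hR y hy
      _ = ε / 2 * h := by field_simp
  have hB : ‖h • (T h (B y) - B y)‖ ≤ ε / 2 * h := by
    rw [norm_smul, Real.norm_eq_abs, abs_of_nonneg hh, mul_comm]
    exact mul_le_mul_of_nonneg_right (hunif h ⟨hh, le_rfl⟩ _ (mem_image_of_mem B hy)) hh
  calc _ = ‖T h ((NormedSpace.exp (h • B) - 1 - h • B) y) + h • (T h (B y) - B y)‖ := by
        simp only [sub_apply, smul_apply, map_sub, map_smul, one_apply_eq_self]
        congr 1; module
    _ ≤ ε / 2 * h + ε / 2 * h := (norm_add_le _ _).trans (add_le_add hrem hB)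
    _ = ε * h := by ring

end IsC0Semigroup

theorem eventually_norm_sub_trotter_le {T U : ℝ → E →L[ℝ] E} (hT : IsC0Semigroup T)
    (hU : IsC0Semigroup U) (A : E → E) (B : E →L[ℝ] E) {K : Set E} (hK : IsCompact K)
    (hGK : IsCompact ((fun y => A y + B y) '' K))
    (hTA : ∀ y ∈ K, HasDerivWithinAt (fun s => T s y) (A y) (Ici 0) 0)
    (hUA : ∀ y ∈ K, HasDerivWithinAt (fun s => U s y) (A y + B y) (Ici 0) 0)
    {ε : ℝ} (hε : 0 < ε) :
    ∀ᶠ h in 𝓝[≥] 0, ∀ y ∈ K, ‖U h y - (T h ∘L NormedSpace.exp (h • B)) y‖ ≤ ε * h := by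
  filter_upwards [hT.eventually_norm_apply_sub_sub_smul_le (hGK.add (hK.image (-B).continuous))
      (by positivity : 0 < ε / 3),
    hU.eventually_norm_apply_sub_sub_smul_le hGK (by positivity : 0 < ε / 3),
    hT.eventually_norm_apply_exp_sub_le B hK (by positivity : 0 < ε / 3)]
    with h hTh hUh hexp y hy
  have hU' := hUh y _ (mem_image_of_mem _ hy) (hUA y hy)
  have hAy : A y ∈ (fun y => A y + B y) '' K + (-B) '' K := by
    simpa using add_mem_add (mem_image_of_mem (fun y => A y + B y) hy) (mem_image_of_mem (-B) hy)
  have hT' := hTh y (A y) hAy (hTA y hy)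
  have hexp' := hexp y hy
  calc _ = ‖(U h y - y - h • (A y + B y)) - (T h y - y - h • A y)
          - (T h (NormedSpace.exp (h • B) y) - T h y - h • B y)‖ := by
        rw [ContinuousLinearMap.comp_apply]; congr 1; module
    _ ≤ ε / 3 * h + ε / 3 * h + ε / 3 * h :=
        (norm_sub_le _ _).trans (add_le_add ((norm_sub_le _ _).trans (add_le_add hU' hT')) hexp')
    _ = ε * h := by ring

end Consistency

/-- Trotter product formula: if `(T_t)_{t ≥ 0}` is a strongly continuous semigroup on a Banach
space `E` with generator `A` (with dense domain `dom`), `B` is a bounded operator, and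
`(U_t)_{t ≥ 0}` is the strongly continuous semigroup generated by `A + B`, then
`U_t x = lim_n (T_{t/n} e^{tB/n})^n x` for all `x ∈ E`. -/
theorem stmt_11 {E : Type*} [NormedAddCommGroup E] [NormedSpace ℝ E] [CompleteSpace E]
    (T U : ℝ → E →L[ℝ] E) (B : E →L[ℝ] E)
    (dom : Submodule ℝ E) (hdom : Dense (dom : Set E))
    (A : E → E)
    (hT0 : T 0 = 1) (hU0 : U 0 = 1)
    (hTsem : ∀ s t : ℝ, 0 ≤ s → 0 ≤ t → T (s + t) = T s ∘L T t)
    (hUsem : ∀ s t : ℝ, 0 ≤ s → 0 ≤ t → U (s + t) = U s ∘L U t)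
    (hTcont : ∀ x : E, ContinuousOn (fun t => T t x) (Set.Ici 0))
    (hUcont : ∀ x : E, ContinuousOn (fun t => U t x) (Set.Ici 0))
    -- `A` is the generator of `T` on the domain `dom`
    (hTgen : ∀ x ∈ dom, ∀ t : ℝ, 0 ≤ t → T t x ∈ dom ∧
      HasDerivWithinAt (fun s => T s x) (A (T t x)) (Set.Ici 0) t)
    -- `A + B` is the generator of `U` on the domain `dom`
    (hUgen : ∀ x ∈ dom, ∀ t : ℝ, 0 ≤ t → U t x ∈ dom ∧
      HasDerivWithinAt (fun s => U s x) (A (U t x) + B (U t x)) (Set.Ici 0) t) :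
    ∀ x : E, ∀ t : ℝ, 0 ≤ t →
      Tendsto (fun n : ℕ => ((T (t / n) ∘L NormedSpace.exp ((t / n) • B)) ^ n) x)
        atTop (nhds (U t x)) := by
  intro x t ht
  have hT : IsC0Semigroup T := ⟨⟨hT0, hTsem⟩, hTcont⟩
  have hU : IsC0Semigroup U := ⟨⟨hU0, hUsem⟩, hUcont⟩
  obtain ⟨C, hC⟩ := hT.exists_norm_trotter_pow_le B t
  refine tendsto_apply_of_dense (G := U t) (fun n => hC _ (by positivity) n
    (natCast_mul_div_natCast_le ht le_rfl)) hdom (fun y hy => ?_) x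
  set K := (fun s => U s y) '' Icc 0 t
  have hK : IsCompact K := isCompact_Icc.image_of_continuousOn ((hUcont y).mono Icc_subset_Ici_self)
  have hKdom : ∀ z ∈ K, z ∈ dom := by
    rintro _ ⟨s, hs, rfl⟩
    exact (hUgen y hy s hs.1).1
  refine hU.tendsto_pow_apply_of_consistent _ ht hC fun ε hε => ?_
  filter_upwards [eventually_norm_sub_trotter_le hT hU A B hK
    (hU.isCompact_image_orbit _ t fun s hs => (hUgen y hy s hs).2)
    (fun z hz => by simpa [hT0] using (hTgen z (hKdom z hz) 0 le_rfl).2)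
    (fun z hz => by simpa [hU0] using (hUgen z (hKdom z hz) 0 le_rfl).2) hε] with h hh s hs
  exact hh _ (mem_image_of_mem _ hs)
end

section
/- Let H = e^{itH} generate the one-parameter automorphism group α_t(g) = e^{itH} g e^{-itH} of U₂(H) for a selfadjoint operator H on a complex Hilbert space. Then the following are equivalent: (a) H is diagonalizable; (b) α leaves some maximal abelian subalgebra t ⊆ u₂(H) invariant; (c) α fixes some maximal abelian subalgebra t ⊆ u₂(H) pointwise. -/
/-! (a) ⇒ (c): operators that are diagonal in a common Hilbert basis commute.
(b) ⇒ (a): testing invariance on the rank-one operators `i |c j⟩⟨c j|` shows that each `U t` maps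
every basis line `ℂ c j` onto a basis line. As `t ↦ ⟪c j, U t c j⟫` is continuous with values in
`{0} ∪ S¹` and equals `1` at `t = 0`, every line is fixed, and the diagonal entries are continuous
unitary characters of `ℝ`, hence of the form `t ↦ exp (i t λ)`. -/

/-- `x` is a member of the maximal abelian subalgebra `t_c ⊆ u₂(H)` determined by an
orthonormal (Hilbert) basis `c`: `x` is skew-adjoint, Hilbert–Schmidt, and diagonal with
respect to `c`. -/
def diagSkewHS {H : Type} [NormedAddCommGroup H] [InnerProductSpace ℂ H] [CompleteSpace H]
    {I : Type} (c : HilbertBasis I ℂ H) (x : H →L[ℂ] H) : Prop :=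
  ContinuousLinearMap.adjoint x = -x ∧ Summable (fun i => ‖x (c i)‖ ^ 2) ∧
    ∀ i, ∃ μ : ℂ, x (c i) = μ • c i

open intervalIntegral in
theorem exists_hasDerivAt_mul_self_of_map_add_eq_mul {g : ℝ → ℂ} (hg : Continuous g)
    (h0 : g 0 = 1) (hmul : ∀ s t, g (s + t) = g s * g t) :
    ∃ d : ℂ, ∀ t, HasDerivAt g (d * g t) t := by
  set G : ℝ → ℂ := fun t => ∫ s in (0 : ℝ)..t, g s
  have hG : ∀ t, HasDerivAt G (g t) t := fun t => (hg.integral_hasStrictDerivAt 0 t).hasDerivAt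
  -- `G' 0 = 1`, so `G` does not vanish identically.
  obtain ⟨a, ha⟩ : ∃ a, G a ≠ 0 := by
    by_contra! hGa
    have h := hG 0
    rw [show G = fun _ => 0 from funext hGa, h0] at h
    exact one_ne_zero (h.unique (hasDerivAt_const 0 0))
  -- Averaging `g (t + s) = g t * g s` over `s ∈ [0, a]` expresses `g` through `G`.
  have hgG : ∀ t, g t = (G (t + a) - G t) * (G a)⁻¹ := by
    intro t
    have hshift : g t * G a = G (t + a) - G t := by
      simp_rw [G, ← integral_const_mul, ← hmul, integral_comp_add_left, add_zero,
        eq_sub_iff_add_eq', integral_add_adjacent_intervals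
        (hg.intervalIntegrable 0 t) (hg.intervalIntegrable t (t + a))]
    rw [← hshift, mul_inv_cancel_right₀ ha]
  refine ⟨(g a - 1) * (G a)⁻¹, fun t => ?_⟩
  have h := (((hG (t + a)).comp_add_const t a).sub (hG t)).mul_const (G a)⁻¹
  refine (h.congr_of_eventuallyEq (Filter.Eventually.of_forall hgG)).congr_deriv ?_
  rw [hmul]; ring

theorem eq_cexp_of_hasDerivAt_mul_self {g : ℝ → ℂ} {d : ℂ} (hg : ∀ t, HasDerivAt g (d * g t) t)
    (h0 : g 0 = 1) (t : ℝ) : g t = Complex.exp (d * t) := by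
  have hderiv : ∀ u : ℝ, HasDerivAt (fun u : ℝ => Complex.exp (-(d * u)) * g u) 0 u := by
    intro u
    have hexp : HasDerivAt (fun u : ℝ => Complex.exp (-(d * u))) (Complex.exp (-(d * u)) * -d) u :=
      (((Complex.ofRealCLM.hasDerivAt).const_mul d).neg.cexp).congr_deriv (by simp)
    exact (hexp.fun_mul (hg u)).congr_deriv (by ring)
  have hconst := is_const_of_deriv_eq_zero (fun u => (hderiv u).differentiableAt)
    (fun u => (hderiv u).deriv) t 0
  simp only [Complex.ofReal_zero, mul_zero, neg_zero, Complex.exp_zero, one_mul, h0] at hconst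
  rw [← one_mul (g t), ← Complex.exp_zero, ← sub_self (d * t), sub_eq_add_neg, Complex.exp_add,
    mul_assoc, hconst, mul_one]

theorem exists_eq_cexp_of_map_add_eq_mul {g : ℝ → ℂ} (hg : Continuous g) (h0 : g 0 = 1)
    (hmul : ∀ s t, g (s + t) = g s * g t) (hnorm : ∀ t, ‖g t‖ = 1) :
    ∃ l : ℝ, ∀ t : ℝ, g t = Complex.exp (Complex.I * t * l) := by
  obtain ⟨d, hd⟩ := exists_hasDerivAt_mul_self_of_map_add_eq_mul hg h0 hmul
  have hexp := eq_cexp_of_hasDerivAt_mul_self hd h0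
  have hre : d.re = 0 := by simpa [hexp, Complex.norm_exp] using hnorm 1
  refine ⟨d.im, fun t => ?_⟩
  rw [hexp]
  nth_rewrite 1 [show d = d.im * Complex.I from Complex.ext (by simp [hre]) (by simp)]
  ring_nf

open scoped InnerProductSpace
open InnerProductSpace ContinuousLinearMap

theorem HilbertBasis.ext_continuousLinearMap {𝕜 E F ι : Type*} [RCLike 𝕜]
    [NormedAddCommGroup E] [InnerProductSpace 𝕜 E] [NormedAddCommGroup F] [NormedSpace 𝕜 F]
    (b : HilbertBasis ι 𝕜 E) {f g : E →L[𝕜] F} (h : ∀ i, f (b i) = g (b i)) : f = g :=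
  ContinuousLinearMap.ext_on (Submodule.dense_iff_topologicalClosure_eq_top.mpr b.dense_span)
    (Set.forall_mem_range.mpr h)

theorem ContinuousLinearMap.mul_rankOne_mul_star {𝕜 E : Type*} [RCLike 𝕜]
    [NormedAddCommGroup E] [InnerProductSpace 𝕜 E] [CompleteSpace E] (A : E →L[𝕜] E) (x y : E) :
    A * rankOne 𝕜 x y * star A = rankOne 𝕜 (A x) (A y) := by
  rw [mul_def, mul_def, comp_rankOne, rankOne_comp, star_eq_adjoint, adjoint_adjoint]

theorem Commute.of_apply_basis_eq_smul {𝕜 E ι : Type*} [RCLike 𝕜]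
    [NormedAddCommGroup E] [InnerProductSpace 𝕜 E] (b : HilbertBasis ι 𝕜 E) {f g : E →L[𝕜] E}
    (hf : ∀ i, ∃ μ : 𝕜, f (b i) = μ • b i) (hg : ∀ i, ∃ μ : 𝕜, g (b i) = μ • b i) :
    Commute f g := by
  refine b.ext_continuousLinearMap fun i => ?_
  obtain ⟨μ, hμ⟩ := hf i
  obtain ⟨ν, hν⟩ := hg i
  change f (g (b i)) = g (f (b i))
  rw [hν, hμ, map_smul, map_smul, hμ, hν, smul_smul, smul_smul, mul_comm]

theorem eq_inner_smul_of_rankOne_apply_eq_smul {𝕜 E : Type*} [RCLike 𝕜]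
    [NormedAddCommGroup E] [InnerProductSpace 𝕜 E] {e w : E} (he : ‖e‖ = 1) (hw : ⟪e, w⟫_𝕜 ≠ 0)
    {μ : 𝕜} (h : rankOne 𝕜 w w e = μ • e) : w = ⟪e, w⟫_𝕜 • e := by
  have hw' : ⟪w, e⟫_𝕜 ≠ 0 := by rwa [← inner_conj_symm, map_ne_zero]
  have hspan : w = ((⟪w, e⟫_𝕜)⁻¹ * μ) • e := by
    rw [rankOne_apply] at h
    rw [← smul_smul, ← h, smul_smul, inv_mul_cancel₀ hw', one_smul]
  conv_rhs => rw [hspan, inner_smul_right, inner_self_eq_norm_sq_to_K, he]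
  simpa using hspan

theorem eq_one_of_forall_eq_zero_or_eq_one {X : Type*} [TopologicalSpace X] [PreconnectedSpace X]
    {f : X → ℝ} (hf : Continuous f) (h : ∀ x, f x = 0 ∨ f x = 1) {x₀ : X} (hx₀ : f x₀ = 1)
    (x : X) : f x = 1 := by
  refine (h x).resolve_left fun hx => ?_
  obtain ⟨y, hy⟩ := intermediate_value_univ x x₀ hf (show (1 / 2 : ℝ) ∈ Set.Icc (f x) (f x₀) by
    rw [hx, hx₀]; norm_num)
  rcases h y with hy' | hy' <;> rw [hy'] at hy <;> norm_num at hy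

theorem norm_eq_one_of_apply_eq_smul {𝕜 E : Type*} [RCLike 𝕜] [NormedAddCommGroup E]
    [InnerProductSpace 𝕜 E] [CompleteSpace E] {u : E →L[𝕜] E} (hu : u ∈ unitary (E →L[𝕜] E))
    {e : E} (he : ‖e‖ = 1) {z : 𝕜} (h : u e = z • e) : ‖z‖ = 1 := by
  simpa [h, norm_smul, he] using norm_map_of_mem_unitary hu e

theorem mul_mul_star_eq_self_of_apply_basis_eq_smul {𝕜 E ι : Type*} [RCLike 𝕜]
    [NormedAddCommGroup E] [InnerProductSpace 𝕜 E] [CompleteSpace E] (b : HilbertBasis ι 𝕜 E)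
    {u x : E →L[𝕜] E} (hu : u ∈ unitary (E →L[𝕜] E)) (hub : ∀ i, ∃ μ : 𝕜, u (b i) = μ • b i)
    (hxb : ∀ i, ∃ μ : 𝕜, x (b i) = μ • b i) : u * x * star u = x := by
  rw [(Commute.of_apply_basis_eq_smul b hub hxb).eq, mul_assoc, Unitary.mul_star_self_of_mem hu,
    mul_one]

section

variable {H : Type} [NormedAddCommGroup H] [InnerProductSpace ℂ H] [CompleteSpace H]
  {I : Type} (c : HilbertBasis I ℂ H)

theorem diagSkewHS_I_smul_rankOne_self (j : I) :
    diagSkewHS c (Complex.I • rankOne ℂ (c j) (c j)) := by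
  classical
  have hon := orthonormal_iff_ite.mp c.orthonormal
  refine ⟨?_, ?_, fun i => ⟨if j = i then Complex.I else 0, ?_⟩⟩
  · rw [← star_eq_adjoint, star_smul, star_eq_adjoint, adjoint_rankOne, Complex.star_def,
      Complex.conj_I, neg_smul]
  · refine summable_of_ne_finset_zero (s := {j}) fun i hi => ?_
    simp [hon j i, Ne.symm (Finset.notMem_singleton.mp hi)]
  · by_cases h : j = i <;> simp [hon j i, h, c.orthonormal.1 i]

theorem inner_apply_eq_zero_or_apply_eq_inner_smul {u : H →L[ℂ] H}
    (hu : ∀ x, diagSkewHS c x → diagSkewHS c (u * x * star u)) (j : I) :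
    ⟪c j, u (c j)⟫_ℂ = 0 ∨ u (c j) = ⟪c j, u (c j)⟫_ℂ • c j := by
  refine or_iff_not_imp_left.mpr fun hne => ?_
  obtain ⟨μ, hμ⟩ := (hu _ (diagSkewHS_I_smul_rankOne_self c j)).2.2 j
  rw [mul_smul_comm, smul_mul_assoc, mul_rankOne_mul_star, smul_apply] at hμ
  refine eq_inner_smul_of_rankOne_apply_eq_smul (c.orthonormal.1 j) hne (μ := μ / Complex.I) ?_
  rw [div_eq_inv_mul, ← smul_smul, ← hμ, smul_smul, inv_mul_cancel₀ Complex.I_ne_zero, one_smul]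

variable {U : ℝ → (H →L[ℂ] H)} (hUu : ∀ t, U t ∈ unitary (H →L[ℂ] H)) (hU0 : U 0 = 1)
  (hUcont : ∀ v : H, Continuous fun t => U t v)
  (hc : ∀ (t : ℝ) (x : H →L[ℂ] H), diagSkewHS c x → diagSkewHS c (U t * x * star (U t)))
include hUu hU0 hUcont hc

theorem apply_basis_eq_inner_smul_of_conj_preserves_diagSkewHS (j : I) (t : ℝ) :
    U t (c j) = ⟪c j, U t (c j)⟫_ℂ • c j := by
  have hdich := fun t => inner_apply_eq_zero_or_apply_eq_inner_smul c (hc t) j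
  have hnorm : ∀ t, ‖⟪c j, U t (c j)⟫_ℂ‖ = 0 ∨ ‖⟪c j, U t (c j)⟫_ℂ‖ = 1 := fun t =>
    (hdich t).imp (fun h => by rw [h, norm_zero])
      (norm_eq_one_of_apply_eq_smul (hUu t) (c.orthonormal.1 j))
  have h1 := eq_one_of_forall_eq_zero_or_eq_one (continuous_const.inner (hUcont (c j))).norm
    hnorm (x₀ := 0) (by simp [hU0, c.orthonormal.1 j]) t
  exact (hdich t).resolve_left fun h => by simp [h] at h1

theorem exists_apply_basis_eq_cexp_of_conj_preserves_diagSkewHS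
    (hUadd : ∀ s t, U (s + t) = U s * U t) :
    ∃ lam : I → ℝ, ∀ (t : ℝ) (i : I), U t (c i) = Complex.exp (Complex.I * t * lam i) • c i := by
  have heig := apply_basis_eq_inner_smul_of_conj_preserves_diagSkewHS c hUu hU0 hUcont hc
  have hchar : ∀ j, ∃ l : ℝ, ∀ t : ℝ, ⟪c j, U t (c j)⟫_ℂ = Complex.exp (Complex.I * t * l) := by
    intro j
    refine exists_eq_cexp_of_map_add_eq_mul (continuous_const.inner (hUcont (c j)))
      (by simp [hU0, c.orthonormal.1 j]) (fun s t => ?_)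
      (fun t => norm_eq_one_of_apply_eq_smul (hUu t) (c.orthonormal.1 j) (heig j t))
    rw [hUadd]
    change ⟪c j, U s (U t (c j))⟫_ℂ = _
    obtain ⟨zs, hs⟩ : ∃ z : ℂ, U s (c j) = z • c j := ⟨_, heig j s⟩
    obtain ⟨zt, ht⟩ : ∃ z : ℂ, U t (c j) = z • c j := ⟨_, heig j t⟩
    simp [ht, hs, smul_smul, c.orthonormal.1 j, mul_comm]
  choose lam hlam using hchar
  exact ⟨lam, fun t i => by rw [heig i t, hlam i t]⟩

end

/-- For a strongly continuous unitary one-parameter group `(U_t) = (e^{itH})` and the induced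
automorphisms `α_t(g) = U_t g U_t⁻¹` of `u₂(H)`, the following are equivalent:
(a) `H` is diagonalizable (there is a Hilbert basis of common eigenvectors of the `U_t`);
(b) `α` leaves some maximal abelian subalgebra `t ⊆ u₂(H)` invariant;
(c) `α` fixes some maximal abelian subalgebra `t ⊆ u₂(H)` pointwise. -/
theorem stmt_12 {H : Type} [NormedAddCommGroup H] [InnerProductSpace ℂ H] [CompleteSpace H]
    (U : ℝ → (H →L[ℂ] H))
    (hUu : ∀ t, U t ∈ unitary (H →L[ℂ] H))
    (hU0 : U 0 = 1) (hUadd : ∀ s t, U (s + t) = U s * U t)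
    (hUcont : ∀ v : H, Continuous fun t => U t v) :
    ((∃ (I : Type) (b : HilbertBasis I ℂ H) (lam : I → ℝ),
        ∀ (t : ℝ) (i : I), U t (b i) = Complex.exp (Complex.I * t * lam i) • b i)
      ↔ (∃ (I : Type) (c : HilbertBasis I ℂ H),
          ∀ (t : ℝ) (x : H →L[ℂ] H), diagSkewHS c x → diagSkewHS c (U t * x * star (U t))))
    ∧ ((∃ (I : Type) (c : HilbertBasis I ℂ H),
          ∀ (t : ℝ) (x : H →L[ℂ] H), diagSkewHS c x → diagSkewHS c (U t * x * star (U t)))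
      ↔ (∃ (I : Type) (c : HilbertBasis I ℂ H),
          ∀ (t : ℝ) (x : H →L[ℂ] H), diagSkewHS c x → U t * x * star (U t) = x)) := by
  refine ⟨⟨?_, ?_⟩, ?_, ?_⟩
  · rintro ⟨I, b, lam, hU⟩
    refine ⟨I, b, fun t x hx => ?_⟩
    rwa [mul_mul_star_eq_self_of_apply_basis_eq_smul b (hUu t) (fun i => ⟨_, hU t i⟩) hx.2.2]
  · rintro ⟨I, c, hc⟩
    exact ⟨I, c, exists_apply_basis_eq_cexp_of_conj_preserves_diagSkewHS c hUu hU0 hUcont hc hUadd⟩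
  · rintro ⟨I, c, hc⟩
    obtain ⟨lam, hlam⟩ :=
      exists_apply_basis_eq_cexp_of_conj_preserves_diagSkewHS c hUu hU0 hUcont hc hUadd
    exact ⟨I, c, fun t x hx =>
      mul_mul_star_eq_self_of_apply_basis_eq_smul c (hUu t) (fun i => ⟨_, hlam t i⟩) hx.2.2⟩
  · rintro ⟨I, c, hfix⟩
    exact ⟨I, c, fun t x hx => (hfix t x hx).symm ▸ hx⟩
end

section
/- For g = u₂(H) and ω(x,y) = tr(d[x,y]) with d ∈ u(H), the associated group cocycle for the affine action of G = U₂(H) is Θ_ω(g) = g d g^{-1} − d (under the identification g' ≅ g via the trace pairing), and Θ_ω is bounded on G if and only if d ∈ ℝ i1 + u₂(H). -/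
/-!
Since `g d g⋆ - d = ((g - 1) d - d (g - 1)) g⋆` for unitary `g`, `Θ` takes Hilbert–Schmidt values
on `U₂(H)`; it ignores scalar summands of `d`, so `d = i c 1 + b` with `b` Hilbert–Schmidt gives
`‖Θ(g)‖₂² ≤ 4 ‖b‖₂²`.

Conversely, suppose `‖Θ(g)‖₂² ≤ M` on `U₂(H)`. If `g` carries to `e` a Hilbert basis `e'` that
agrees with `e` off a finite set, the matrix of `Θ(g)` in `e` is the matrix of `d` in `e'` minus
that in `e`. Sign changes `e k ↦ ± e k`, averaged over all sign patterns on a finite set `F`,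
bound the off-diagonal part of `d` on `F` by `M / 2`. The diagonal entries of the skew operator
`d` are `i t j` with `t` bounded; if `c` is a cluster point of `t`, a finitely supported
permutation sending a finite set `G` to indices where `t` is close to `c` bounds
`∑ j ∈ G, (t j - c) ^ 2` by `2 M + 2`. Hence `d - i c 1` is Hilbert–Schmidt.
-/

open scoped InnerProductSpace

theorem norm_sub_sq_le {E : Type*} [SeminormedAddGroup E] (a b : E) :
    ‖a - b‖ ^ 2 ≤ 2 * ‖a‖ ^ 2 + 2 * ‖b‖ ^ 2 := by
  nlinarith [pow_le_pow_left₀ (norm_nonneg _) (norm_sub_le a b) 2, add_sq_le (a := ‖a‖) (b := ‖b‖)]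

theorem Finset.sum_powerset_sign_mul_sign {J : Type*} [DecidableEq J] {F : Finset J} {i j : J}
    (hi : i ∈ F) (hij : i ≠ j) :
    ∑ S ∈ F.powerset, (if i ∈ S then -1 else 1 : ℝ) * (if j ∈ S then -1 else 1) = 0 := by
  -- the sum is the expansion of a product over `F` whose factor at `i` is `-1 + 1`
  have h := Finset.prod_add
    (fun k => (if k = i then -1 else 1 : ℝ) * (if k = j then -1 else 1)) (fun _ => 1) F
  rw [Finset.prod_eq_zero hi (by simp [hij])] at h
  rw [h]
  refine Finset.sum_congr rfl fun S _ => ?_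
  rw [Finset.prod_const_one, mul_one, Finset.prod_mul_distrib, Finset.prod_ite_eq',
    Finset.prod_ite_eq']

theorem Finset.sum_powerset_sign_mul_sign_sub_one_sq {J : Type*} [DecidableEq J] {F : Finset J}
    {i j : J} (hi : i ∈ F) (hij : i ≠ j) :
    ∑ S ∈ F.powerset, ((if i ∈ S then -1 else 1 : ℝ) * (if j ∈ S then -1 else 1) - 1) ^ 2
      = 2 ^ (F.card + 1) := by
  have h : ∀ S : Finset J,
      ((if i ∈ S then -1 else 1 : ℝ) * (if j ∈ S then -1 else 1) - 1) ^ 2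
        = 2 - 2 * ((if i ∈ S then -1 else 1 : ℝ) * (if j ∈ S then -1 else 1)) := fun S => by
    split_ifs <;> norm_num
  simp only [h, Finset.sum_sub_distrib, ← Finset.mul_sum, Finset.sum_powerset_sign_mul_sign hi hij,
    Finset.sum_const, Finset.card_powerset, nsmul_eq_mul]
  push_cast
  ring

theorem exists_forall_infinite_setOf_abs_sub_lt {J : Type*} [Infinite J] {t : J → ℝ} {R : ℝ}
    (ht : ∀ j, |t j| ≤ R) : ∃ c, ∀ δ > 0, {j | |t j - c| < δ}.Infinite := by
  obtain ⟨c, -, hc⟩ := (isCompact_Icc (a := -R) (b := R)).exists_clusterPt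
    (f := Filter.map t Filter.cofinite)
    (Filter.le_principal_iff.2 (Filter.mem_map.2 (Filter.univ_mem' fun j =>
      Set.mem_Icc.2 (abs_le.1 (ht j)))))
  refine ⟨c, fun δ hδ => ?_⟩
  rw [← Filter.frequently_cofinite_iff_infinite]
  exact ((mapClusterPt_iff_frequently.1 hc) _ (Metric.ball_mem_nhds c hδ)).mono fun j hj => by
    simpa [Real.dist_eq] using hj

theorem Set.Infinite.exists_perm_mapsTo {J : Type*} {A : Set J} (hA : A.Infinite) (G : Finset J) :
    ∃ σ : Equiv.Perm J, Set.MapsTo σ G A ∧ ∃ s : Finset J, ∀ j ∉ s, σ j = j := by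
  classical
  obtain ⟨T, hTA, hT⟩ := (hA.sdiff G.finite_toSet).exists_subset_card_eq G.card
  let φ : G ≃ T := Finset.equivOfCardEq hT.symm
  have hTG : ∀ k ∈ T, k ∉ G := fun k hk => (hTA hk).2
  let f : J → J := fun j =>
    if hj : j ∈ G then φ ⟨j, hj⟩ else if hj' : j ∈ T then φ.symm ⟨j, hj'⟩ else j
  have hf : Function.Involutive f := by
    intro j
    by_cases hj : j ∈ G
    · simp [f, hj, hTG _ (φ ⟨j, hj⟩).2]
    · by_cases hj' : j ∈ T <;> simp [f, hj, hj']
  refine ⟨hf.toPerm f, fun j (hj : j ∈ G) => ?_, G ∪ T, fun j hj => ?_⟩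
  · simpa [f, hj] using (hTA (φ ⟨j, hj⟩).2).1
  · simp_all [f]

theorem hasDerivAt_exp_smul_mul_mul_star_exp_smul {A : Type*} [NormedRing A] [NormedAlgebra ℝ A]
    [CompleteSpace A] [StarRing A] [ContinuousStar A] [StarModule ℝ A] (x d : A) :
    HasDerivAt (fun t : ℝ => NormedSpace.exp (t • x) * d * star (NormedSpace.exp (t • x)))
      (x * d + d * star x) 0 := by
  have hstar : ∀ t : ℝ, star (NormedSpace.exp (t • x)) = NormedSpace.exp (t • star x) := fun t => by
    rw [NormedSpace.star_exp, star_smul, star_trivial]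
  simp only [hstar]
  have h := ((hasDerivAt_exp_smul_const (𝕂 := ℝ) x 0).mul_const d).mul
    (hasDerivAt_exp_smul_const (𝕂 := ℝ) (star x) 0)
  simp only [zero_smul, NormedSpace.exp_zero, mul_one, one_mul] at h
  exact h

theorem mul_smul_one_add_mul_star_sub {S R : Type*} [CommSemiring S] [Ring R] [StarRing R]
    [Algebra S R] {g : R} (hg : g ∈ unitary R) (c : S) (b : R) :
    g * (c • 1 + b) * star g - (c • 1 + b) = g * b * star g - b := by
  rw [mul_add, add_mul, mul_smul_one, smul_mul_assoc, Unitary.mul_star_self_of_mem hg]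
  abel

theorem ContinuousLinearMap.re_inner_apply_eq_zero_of_star_eq_neg {𝕜 H : Type*} [RCLike 𝕜]
    [NormedAddCommGroup H] [InnerProductSpace 𝕜 H] [CompleteSpace H] {d : H →L[𝕜] H}
    (hd : star d = -d) (v : H) : RCLike.re ⟪v, d v⟫_𝕜 = 0 := by
  have h : ⟪v, d v⟫_𝕜 = -(starRingEnd 𝕜) ⟪v, d v⟫_𝕜 :=
    calc ⟪v, d v⟫_𝕜 = ⟪star d v, v⟫_𝕜 := (adjoint_inner_left d v v).symm
      _ = -(starRingEnd 𝕜) ⟪v, d v⟫_𝕜 := by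
        rw [hd, neg_apply, inner_neg_left, inner_conj_symm]
  have h2 := congrArg RCLike.re h
  rw [map_neg, RCLike.conj_re] at h2
  linarith

theorem Complex.sq_norm_sub_ofReal_mul_I_of_re_eq_zero {z : ℂ} (hz : z.re = 0) (c : ℝ) :
    ‖z - c * I‖ ^ 2 = (z.im - c) ^ 2 := by
  rw [Complex.sq_norm, Complex.normSq_apply]
  simp only [Complex.sub_re, Complex.sub_im, Complex.mul_re, Complex.mul_im, Complex.ofReal_re,
    Complex.ofReal_im, Complex.I_re, Complex.I_im, hz]
  ring

theorem ContinuousLinearMap.norm_inner_star_apply {𝕜 H : Type*} [RCLike 𝕜] [NormedAddCommGroup H]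
    [InnerProductSpace 𝕜 H] [CompleteSpace H] (A : H →L[𝕜] H) (x y : H) :
    ‖⟪x, star A y⟫_𝕜‖ = ‖⟪y, A x⟫_𝕜‖ := by
  rw [star_eq_adjoint, adjoint_inner_right, norm_inner_symm]

namespace HilbertBasis

variable {𝕜 : Type*} [RCLike 𝕜] {H : Type*} [NormedAddCommGroup H] [InnerProductSpace 𝕜 H]
  {J : Type*} (e : HilbertBasis J 𝕜 H)

theorem hasSum_norm_inner_sq (v : H) : HasSum (fun j => ‖⟪e j, v⟫_𝕜‖ ^ 2) (‖v‖ ^ 2) := by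
  simpa only [ENNReal.toReal_ofNat, Real.rpow_two, e.repr_apply_apply,
    LinearIsometryEquiv.norm_map] using lp.hasSum_norm (p := 2) (by norm_num) (e.repr v)

def IsHilbertSchmidt (A : H →L[𝕜] H) : Prop :=
  Summable fun j => ‖A (e j)‖ ^ 2

noncomputable def hsNormSq (A : H →L[𝕜] H) : ℝ :=
  ∑' j, ‖A (e j)‖ ^ 2

variable {e}

theorem isHilbertSchmidt_iff_summable_inner (A : H →L[𝕜] H) :
    e.IsHilbertSchmidt A ↔ Summable fun p : J × J => ‖⟪e p.1, A (e p.2)⟫_𝕜‖ ^ 2 := by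
  rw [← (Equiv.prodComm J J).summable_iff, Function.comp_def,
    summable_prod_of_nonneg (fun p => sq_nonneg _)]
  simp only [Equiv.prodComm_apply, Prod.swap_prod_mk,
    fun j => (e.hasSum_norm_inner_sq (A (e j))).tsum_eq,
    fun j => (e.hasSum_norm_inner_sq (A (e j))).summable, implies_true, true_and,
    IsHilbertSchmidt]

theorem IsHilbertSchmidt.hsNormSq_eq_tsum_inner {A : H →L[𝕜] H} (hA : e.IsHilbertSchmidt A) :
    e.hsNormSq A = ∑' p : J × J, ‖⟪e p.1, A (e p.2)⟫_𝕜‖ ^ 2 := by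
  have h : Summable fun p : J × J => ‖⟪e p.2, A (e p.1)⟫_𝕜‖ ^ 2 :=
    (Equiv.prodComm J J).summable_iff.2 ((isHilbertSchmidt_iff_summable_inner A).1 hA)
  rw [← (Equiv.prodComm J J).tsum_eq, hsNormSq]
  refine Eq.trans ?_ (h.tsum_prod' fun j => (e.hasSum_norm_inner_sq (A (e j))).summable).symm
  exact tsum_congr fun j => (e.hasSum_norm_inner_sq (A (e j))).tsum_eq.symm

theorem IsHilbertSchmidt.sum_le_hsNormSq {A : H →L[𝕜] H} (hA : e.IsHilbertSchmidt A)
    (s : Finset (J × J)) : ∑ p ∈ s, ‖⟪e p.1, A (e p.2)⟫_𝕜‖ ^ 2 ≤ e.hsNormSq A := by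
  rw [hA.hsNormSq_eq_tsum_inner]
  exact ((isHilbertSchmidt_iff_summable_inner A).1 hA).sum_le_tsum s fun _ _ => sq_nonneg _

theorem isHilbertSchmidt_of_sum_le (A : H →L[𝕜] H) (C : ℝ)
    (hC : ∀ F : Finset J, ∑ p ∈ F ×ˢ F, ‖⟪e p.1, A (e p.2)⟫_𝕜‖ ^ 2 ≤ C) :
    e.IsHilbertSchmidt A := by
  classical
  refine (isHilbertSchmidt_iff_summable_inner A).2 <|
    summable_of_sum_le (c := C) (fun p => sq_nonneg _) fun s => ?_
  have hs : s ⊆ (s.image Prod.fst ∪ s.image Prod.snd) ×ˢ (s.image Prod.fst ∪ s.image Prod.snd) :=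
    fun p hp => Finset.mem_product.2
      ⟨Finset.mem_union_left _ (Finset.mem_image_of_mem _ hp),
        Finset.mem_union_right _ (Finset.mem_image_of_mem _ hp)⟩
  exact (Finset.sum_le_sum_of_subset_of_nonneg hs fun _ _ _ => sq_nonneg _).trans (hC _)

theorem isHilbertSchmidt_of_forall_notMem_eq_zero (A : H →L[𝕜] H) (s : Finset J)
    (hs : ∀ j ∉ s, A (e j) = 0) : e.IsHilbertSchmidt A :=
  summable_of_ne_finset_zero (s := s) fun j hj => by simp [hs j hj]

theorem IsHilbertSchmidt.sub {A B : H →L[𝕜] H} (hA : e.IsHilbertSchmidt A)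
    (hB : e.IsHilbertSchmidt B) : e.IsHilbertSchmidt (A - B) :=
  Summable.of_nonneg_of_le (fun _ => sq_nonneg _) (fun j => norm_sub_sq_le (A (e j)) (B (e j)))
    ((Summable.mul_left 2 hA).add (Summable.mul_left 2 hB))

theorem hsNormSq_sub_le {A B : H →L[𝕜] H} (hA : e.IsHilbertSchmidt A)
    (hB : e.IsHilbertSchmidt B) : e.hsNormSq (A - B) ≤ 2 * e.hsNormSq A + 2 * e.hsNormSq B := by
  have hA2 := Summable.mul_left 2 hA
  have hB2 := Summable.mul_left 2 hB
  rw [hsNormSq, hsNormSq, hsNormSq, ← tsum_mul_left, ← tsum_mul_left, ← hA2.tsum_add hB2]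
  exact (hA.sub hB).tsum_le_tsum (fun j => norm_sub_sq_le (A (e j)) (B (e j))) (hA2.add hB2)

theorem IsHilbertSchmidt.mul_left (B : H →L[𝕜] H) {A : H →L[𝕜] H} (hA : e.IsHilbertSchmidt A) :
    e.IsHilbertSchmidt (B * A) :=
  Summable.of_nonneg_of_le (fun _ => sq_nonneg _)
    (fun j => by
      rw [mul_apply_eq_comp, ← mul_pow]
      exact pow_le_pow_left₀ (norm_nonneg _) (B.le_opNorm _) 2)
    (Summable.mul_left (‖B‖ ^ 2) hA)

theorem hsNormSq_unitary_mul [CompleteSpace H] {U : H →L[𝕜] H}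
    (hU : U ∈ unitary (H →L[𝕜] H)) (A : H →L[𝕜] H) : e.hsNormSq (U * A) = e.hsNormSq A := by
  simp only [hsNormSq, mul_apply_eq_comp, U.norm_map_of_mem_unitary hU]

section

variable [CompleteSpace H]

theorem IsHilbertSchmidt.star {A : H →L[𝕜] H} (hA : e.IsHilbertSchmidt A) :
    e.IsHilbertSchmidt (star A) := by
  rw [isHilbertSchmidt_iff_summable_inner] at hA ⊢
  exact ((Equiv.prodComm J J).summable_iff.2 hA).congr fun p => by
    simp [ContinuousLinearMap.norm_inner_star_apply]

theorem hsNormSq_star {A : H →L[𝕜] H} (hA : e.IsHilbertSchmidt A) :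
    e.hsNormSq (star A) = e.hsNormSq A := by
  rw [(IsHilbertSchmidt.star hA).hsNormSq_eq_tsum_inner, hA.hsNormSq_eq_tsum_inner,
    ← (Equiv.prodComm J J).tsum_eq]
  exact tsum_congr fun p => by simp [ContinuousLinearMap.norm_inner_star_apply]

theorem IsHilbertSchmidt.mul_right {A : H →L[𝕜] H} (hA : e.IsHilbertSchmidt A) (B : H →L[𝕜] H) :
    e.IsHilbertSchmidt (A * B) := by
  have h := (IsHilbertSchmidt.mul_left (ContinuousLinearMap.adjoint B) hA.star).star
  rwa [star_mul, star_star, ContinuousLinearMap.star_eq_adjoint,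
    ContinuousLinearMap.adjoint_adjoint] at h

theorem hsNormSq_mul_unitary {A : H →L[𝕜] H} (hA : e.IsHilbertSchmidt A)
    {U : H →L[𝕜] H} (hU : U ∈ unitary (H →L[𝕜] H)) : e.hsNormSq (A * U) = e.hsNormSq A := by
  rw [← hsNormSq_star (hA.mul_right U), star_mul, hsNormSq_unitary_mul (Unitary.star_mem hU),
    hsNormSq_star hA]

end

noncomputable def equiv (e e' : HilbertBasis J 𝕜 H) : H ≃ₗᵢ[𝕜] H :=
  e.repr.trans e'.repr.symm

@[simp]
theorem equiv_apply_self (e e' : HilbertBasis J 𝕜 H) (j : J) : e.equiv e' (e j) = e' j := by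
  classical
  simp [equiv, HilbertBasis.repr_self]

@[simp]
theorem equiv_symm (e e' : HilbertBasis J 𝕜 H) : (e.equiv e').symm = e'.equiv e :=
  rfl

theorem isHilbertSchmidt_equiv_sub_one (e' : HilbertBasis J 𝕜 H) (s : Finset J)
    (hs : ∀ j ∉ s, e' j = e j) : e.IsHilbertSchmidt ((e'.equiv e : H →L[𝕜] H) - 1) :=
  isHilbertSchmidt_of_forall_notMem_eq_zero _ s fun j hj => by
    have h := equiv_apply_self e' e j
    rw [hs j hj] at h
    simp [h]

section

variable [CompleteSpace H]

noncomputable def reindex {J' : Type*} (e : HilbertBasis J 𝕜 H) (σ : J ≃ J') :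
    HilbertBasis J' 𝕜 H :=
  HilbertBasis.mk (e.orthonormal.comp _ σ.symm.injective) <| by
    rw [σ.symm.surjective.range_comp]
    exact e.dense_span.ge

@[simp]
theorem reindex_apply {J' : Type*} (e : HilbertBasis J 𝕜 H) (σ : J ≃ J') (j : J') :
    e.reindex σ j = e (σ.symm j) := by
  simp [reindex]

noncomputable def unitarySMul (e : HilbertBasis J 𝕜 H) (w : J → unitary 𝕜) :
    HilbertBasis J 𝕜 H :=
  HilbertBasis.mk (v := fun j => (w j : 𝕜) • e j)
    (by
      classical
      refine orthonormal_iff_ite.2 fun i j => ?_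
      rw [inner_smul_left, inner_smul_right, orthonormal_iff_ite.1 e.orthonormal]
      split_ifs with h
      · subst h; simpa using Unitary.star_mul_self_of_mem (w i).2
      · simp) <| by
    refine le_trans e.dense_span.ge (Submodule.topologicalClosure_mono <|
      Submodule.span_le.2 <| Set.range_subset_iff.2 fun j => ?_)
    have : e j = (star (w j) : 𝕜) • ((w j : 𝕜) • e j) := by
      rw [smul_smul, Unitary.star_mul_self_of_mem (w j).2, one_smul]
    rw [this]
    exact Submodule.smul_mem _ _ (Submodule.subset_span ⟨j, rfl⟩)

@[simp]
theorem unitarySMul_apply (e : HilbertBasis J 𝕜 H) (w : J → unitary 𝕜) (j : J) :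
    e.unitarySMul w j = (w j : 𝕜) • e j := by
  simp [unitarySMul]

theorem isHilbertSchmidt_conj_sub (d : H →L[𝕜] H) {g : H →L[𝕜] H}
    (hg : g ∈ unitary (H →L[𝕜] H)) (hg1 : e.IsHilbertSchmidt (g - 1)) :
    e.IsHilbertSchmidt (g * d * star g - d) := by
  have h : g * d * star g - d = ((g - 1) * d - d * (g - 1)) * star g := by
    calc g * d * star g - d = g * d * star g - d * (g * star g) := by
          rw [Unitary.mul_star_self_of_mem hg, mul_one]
      _ = ((g - 1) * d - d * (g - 1)) * star g := by noncomm_ring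
  rw [h]
  exact ((hg1.mul_right d).sub (hg1.mul_left d)).mul_right _

theorem hsNormSq_conj_sub_le {g : H →L[𝕜] H} (hg : g ∈ unitary (H →L[𝕜] H)) {b : H →L[𝕜] H}
    (hb : e.IsHilbertSchmidt b) : e.hsNormSq (g * b * star g - b) ≤ 4 * e.hsNormSq b := by
  have hgb : e.IsHilbertSchmidt (g * b * star g) := (hb.mul_left g).mul_right _
  have h := hsNormSq_sub_le hgb hb
  rwa [hsNormSq_mul_unitary (hb.mul_left g) (Unitary.star_mem hg), hsNormSq_unitary_mul hg,
    ← add_mul, show (2 : ℝ) + 2 = 4 by norm_num] at h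

theorem inner_equiv_mul_mul_star_sub_apply (e' : HilbertBasis J 𝕜 H) (d : H →L[𝕜] H) (i j : J) :
    ⟪e i, ((e'.equiv e : H →L[𝕜] H) * d * star (e'.equiv e : H →L[𝕜] H) - d) (e j)⟫_𝕜
      = ⟪e' i, d (e' j)⟫_𝕜 - ⟪e i, d (e j)⟫_𝕜 := by
  rw [LinearIsometryEquiv.star_eq_symm, equiv_symm, sub_apply, mul_apply_eq_comp,
    mul_apply_eq_comp, inner_sub_right, ← (e'.equiv e).inner_map_map (e' i),
    equiv_apply_self]
  simp

theorem sum_norm_inner_sub_sq_le {d : H →L[𝕜] H} {M : ℝ}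
    (hbd : ∀ g : H →L[𝕜] H, g ∈ unitary (H →L[𝕜] H) → e.IsHilbertSchmidt (g - 1) →
      e.hsNormSq (g * d * star g - d) ≤ M)
    (e' : HilbertBasis J 𝕜 H) (s : Finset J) (hs : ∀ j ∉ s, e' j = e j) (t : Finset (J × J)) :
    ∑ p ∈ t, ‖⟪e' p.1, d (e' p.2)⟫_𝕜 - ⟪e p.1, d (e p.2)⟫_𝕜‖ ^ 2 ≤ M := by
  have hg := (Unitary.linearIsometryEquiv.symm (e'.equiv e)).2
  have hg1 := isHilbertSchmidt_equiv_sub_one e' s hs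
  simp only [← inner_equiv_mul_mul_star_sub_apply]
  exact ((isHilbertSchmidt_conj_sub d hg hg1).sum_le_hsNormSq t).trans (hbd _ hg hg1)

theorem sum_offDiag_norm_inner_sq_le {d : H →L[𝕜] H} {M : ℝ}
    (hbd : ∀ g : H →L[𝕜] H, g ∈ unitary (H →L[𝕜] H) → e.IsHilbertSchmidt (g - 1) →
      e.hsNormSq (g * d * star g - d) ≤ M)
    (F : Finset J) : ∑ p ∈ F.offDiag, ‖⟪e p.1, d (e p.2)⟫_𝕜‖ ^ 2 ≤ M / 2 := by
  classical
  let ε : Finset J → J → ℝ := fun S k => if k ∈ S then -1 else 1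
  have hS : ∀ S ∈ F.powerset,
      ∑ p ∈ F.offDiag, (ε S p.1 * ε S p.2 - 1) ^ 2 * ‖⟪e p.1, d (e p.2)⟫_𝕜‖ ^ 2 ≤ M := by
    intro S _
    let w : J → unitary 𝕜 := fun k => if k ∈ S then -1 else 1
    have hw : ∀ k, (w k : 𝕜) = (ε S k : 𝕜) := fun k => by
      by_cases hk : k ∈ S <;> simp [w, ε, hk, Unitary.coe_neg]
    refine le_of_eq_of_le (Finset.sum_congr rfl fun p _ => ?_)
      (sum_norm_inner_sub_sq_le hbd (e.unitarySMul w) S (fun k hk => by simp [w, hk]) F.offDiag)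
    rw [unitarySMul_apply, unitarySMul_apply, map_smul, inner_smul_left, inner_smul_right, hw, hw,
      RCLike.conj_ofReal]
    have h : (ε S p.1 : 𝕜) * ((ε S p.2 : 𝕜) * ⟪e p.1, d (e p.2)⟫_𝕜) - ⟪e p.1, d (e p.2)⟫_𝕜
        = ((ε S p.1 * ε S p.2 - 1 : ℝ) : 𝕜) * ⟪e p.1, d (e p.2)⟫_𝕜 := by
      push_cast; ring
    rw [h, norm_mul, RCLike.norm_ofReal, mul_pow, sq_abs]
  have hsum : ∑ S ∈ F.powerset, ∑ p ∈ F.offDiag,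
      (ε S p.1 * ε S p.2 - 1) ^ 2 * ‖⟪e p.1, d (e p.2)⟫_𝕜‖ ^ 2
        = 2 ^ (F.card + 1) * ∑ p ∈ F.offDiag, ‖⟪e p.1, d (e p.2)⟫_𝕜‖ ^ 2 := by
    rw [Finset.sum_comm, Finset.mul_sum]
    refine Finset.sum_congr rfl fun p hp => ?_
    obtain ⟨hp1, -, hp12⟩ := Finset.mem_offDiag.1 hp
    rw [← Finset.sum_mul, Finset.sum_powerset_sign_mul_sign_sub_one_sq hp1 hp12]
  have h := Finset.sum_le_sum hS
  rw [hsum, Finset.sum_const, Finset.card_powerset, nsmul_eq_mul, pow_succ] at h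
  push_cast at h
  have h2 : (0 : ℝ) < 2 ^ F.card := by positivity
  nlinarith

theorem exists_sum_sq_im_inner_sub_le [Infinite J] {d : H →L[𝕜] H} {M : ℝ}
    (hbd : ∀ g : H →L[𝕜] H, g ∈ unitary (H →L[𝕜] H) → e.IsHilbertSchmidt (g - 1) →
      e.hsNormSq (g * d * star g - d) ≤ M) :
    ∃ c : ℝ, ∀ G : Finset J, ∑ j ∈ G, (RCLike.im ⟪e j, d (e j)⟫_𝕜 - c) ^ 2 ≤ 2 * M + 2 := by
  let t : J → ℝ := fun j => RCLike.im ⟪e j, d (e j)⟫_𝕜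
  have ht : ∀ j, |t j| ≤ ‖d‖ := fun j =>
    (RCLike.abs_im_le_norm _).trans <| (norm_inner_le_norm _ _).trans <| by
      simpa [e.orthonormal.1 j] using d.le_opNorm (e j)
  obtain ⟨c, hc⟩ := exists_forall_infinite_setOf_abs_sub_lt ht
  refine ⟨c, fun G => ?_⟩
  obtain ⟨σ, hσ, s, hs⟩ := (hc (1 / (G.card + 1)) (by positivity)).exists_perm_mapsTo G
  have hmove : ∑ j ∈ G, (t (σ j) - t j) ^ 2 ≤ M := by
    have h := sum_norm_inner_sub_sq_le hbd (e.reindex σ.symm) s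
      (fun j hj => by simp [hs j hj]) G.diag
    rw [Finset.diag, Finset.sum_map] at h
    refine le_trans (Finset.sum_le_sum fun j _ => ?_) h
    simp only [Function.diag, Function.Embedding.coeFn_mk, reindex_apply, Equiv.symm_symm]
    rw [← sq_abs, ← map_sub]
    exact pow_le_pow_left₀ (abs_nonneg _) (RCLike.abs_im_le_norm _) 2
  have hclose : ∑ j ∈ G, (t (σ j) - c) ^ 2 ≤ 1 := by
    have hn : (0 : ℝ) ≤ G.card := Nat.cast_nonneg _
    calc ∑ j ∈ G, (t (σ j) - c) ^ 2 ≤ ∑ _j ∈ G, (1 / ((G.card : ℝ) + 1)) ^ 2 :=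
          Finset.sum_le_sum fun j hj => by
            rw [← sq_abs]
            exact pow_le_pow_left₀ (abs_nonneg _) (hσ hj).le 2
      _ = G.card / (G.card + 1) ^ 2 := by
          rw [Finset.sum_const, nsmul_eq_mul, div_pow, one_pow, mul_one_div]
      _ ≤ 1 := by
          rw [div_le_one (by positivity)]; nlinarith
  calc ∑ j ∈ G, (t j - c) ^ 2
      ≤ ∑ j ∈ G, (2 * (t (σ j) - t j) ^ 2 + 2 * (t (σ j) - c) ^ 2) :=
        Finset.sum_le_sum fun j _ => by nlinarith [sq_nonneg (t j - 2 * t (σ j) + c)]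
    _ = 2 * ∑ j ∈ G, (t (σ j) - t j) ^ 2 + 2 * ∑ j ∈ G, (t (σ j) - c) ^ 2 := by
        rw [Finset.sum_add_distrib, ← Finset.mul_sum, ← Finset.mul_sum]
    _ ≤ 2 * M + 2 := by linarith

end

end HilbertBasis

section

variable {H : Type*} [NormedAddCommGroup H] [InnerProductSpace ℂ H] [CompleteSpace H]
  {J : Type*} {e : HilbertBasis J ℂ H}

theorem HilbertBasis.exists_eq_smul_one_add_of_bounded {d : H →L[ℂ] H} (hd : star d = -d) {M : ℝ}
    (hbd : ∀ g : H →L[ℂ] H, g ∈ unitary (H →L[ℂ] H) → e.IsHilbertSchmidt (g - 1) →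
      e.hsNormSq (g * d * star g - d) ≤ M) :
    ∃ (c : ℝ) (b : H →L[ℂ] H), star b = -b ∧ e.IsHilbertSchmidt b ∧
      d = ((c : ℂ) * Complex.I) • (1 : H →L[ℂ] H) + b := by
  classical
  cases finite_or_infinite J
  · exact ⟨0, d, hd, Summable.of_finite, by simp⟩
  obtain ⟨c, hc⟩ := e.exists_sum_sq_im_inner_sub_le hbd
  refine ⟨c, d - ((c : ℂ) * Complex.I) • 1, ?_, ?_, by abel⟩
  · have hI : star ((c : ℂ) * Complex.I) = -((c : ℂ) * Complex.I) := by simp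
    rw [star_sub, hd, star_smul, star_one, hI, neg_smul]
    abel
  refine e.isHilbertSchmidt_of_sum_le _ (M / 2 + (2 * M + 2)) fun F => ?_
  rw [← F.diag_union_offDiag, Finset.sum_union F.disjoint_diag_offDiag, Finset.diag,
    Finset.sum_map, add_comm]
  refine add_le_add (le_of_eq_of_le (Finset.sum_congr rfl fun p hp => ?_)
    (e.sum_offDiag_norm_inner_sq_le hbd F)) (le_of_eq_of_le (Finset.sum_congr rfl fun j _ => ?_)
    (hc F))
  · rw [sub_apply, smul_apply, one_apply_eq_self, inner_sub_right, inner_smul_right,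
      e.orthonormal.2 (Finset.mem_offDiag.1 hp).2.2, mul_zero, sub_zero]
  · have hre := ContinuousLinearMap.re_inner_apply_eq_zero_of_star_eq_neg hd (e j)
    simp only [Function.diag, Function.Embedding.coeFn_mk]
    rw [sub_apply, smul_apply, one_apply_eq_self, inner_sub_right, inner_smul_right,
      orthonormal_iff_ite.1 e.orthonormal j j, if_pos rfl, mul_one]
    exact Complex.sq_norm_sub_ofReal_mul_I_of_re_eq_zero hre c

end

/-- For `g = u₂(H)` and the cocycle `ω(x,y) = tr(d[x,y])` with `d ∈ u(H)`, the associated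
group cocycle for the affine action of `G = U₂(H)` is `Θ_ω(g) = g d g⁻¹ − d` (under the
identification `g' ≅ g` by the trace pairing): it satisfies the `1`-cocycle identity, takes
values in `u₂(H)`, and has derivative `[x, d]` at the identity along `exp(t x)`; moreover
`Θ_ω` is bounded on `U₂(H)` if and only if `d ∈ ℝ i 1 + u₂(H)`. -/
theorem stmt_18 {H : Type} [NormedAddCommGroup H] [InnerProductSpace ℂ H] [CompleteSpace H]
    {J : Type} (e : HilbertBasis J ℂ H)
    (d : H →L[ℂ] H) (hd : star d = -d) :
    -- the cocycle identity for `Θ(g) = g d g* − d`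
    (∀ g h : H →L[ℂ] H, g ∈ unitary (H →L[ℂ] H) → h ∈ unitary (H →L[ℂ] H) →
        (g * h) * d * star (g * h) - d
          = g * (h * d * star h - d) * star g + (g * d * star g - d))
    -- `Θ` takes values in `u₂(H)`
    ∧ (∀ g : H →L[ℂ] H, g ∈ unitary (H →L[ℂ] H) →
        Summable (fun j => ‖(g - 1) (e j)‖ ^ 2) →
        (star (g * d * star g - d) = -(g * d * star g - d)
          ∧ Summable (fun j => ‖(g * d * star g - d) (e j)‖ ^ 2)))
    -- derivative at the identity: `T_e(Θ)(x) = [x, d]`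
    ∧ (∀ x : H →L[ℂ] H, star x = -x → Summable (fun j => ‖x (e j)‖ ^ 2) →
        HasDerivAt
          (fun t : ℝ =>
            NormedSpace.exp (t • x) * d * star (NormedSpace.exp (t • x)) - d)
          (x * d - d * x) 0)
    -- `Θ` is bounded (in the Hilbert–Schmidt norm) iff `d ∈ ℝ i 1 + u₂(H)`
    ∧ ((∃ M : ℝ, ∀ g : H →L[ℂ] H, g ∈ unitary (H →L[ℂ] H) →
          Summable (fun j => ‖(g - 1) (e j)‖ ^ 2) →
          (∑' j, ‖(g * d * star g - d) (e j)‖ ^ 2) ≤ M)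
        ↔ (∃ (c : ℝ) (b : H →L[ℂ] H), star b = -b ∧ Summable (fun j => ‖b (e j)‖ ^ 2) ∧
            d = ((c : ℂ) * Complex.I) • (1 : H →L[ℂ] H) + b)) := by
  refine ⟨fun g h _ _ => by rw [star_mul]; noncomm_ring,
    fun g hg hg1 => ⟨by simp only [star_sub, star_mul, star_star, hd]; noncomm_ring,
      e.isHilbertSchmidt_conj_sub d hg hg1⟩,
    fun x hx _ => ?_, ⟨fun ⟨M, hM⟩ => e.exists_eq_smul_one_add_of_bounded hd hM, ?_⟩⟩
  · simpa [hx, ← sub_eq_add_neg] using (hasDerivAt_exp_smul_mul_mul_star_exp_smul x d).sub_const d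
  · rintro ⟨c, b, -, hb, rfl⟩
    refine ⟨4 * e.hsNormSq b, fun g hg _ => ?_⟩
    rw [mul_smul_one_add_mul_star_sub hg]
    exact e.hsNormSq_conj_sub_le hg hb
end
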